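/- arXiv:2206.00158 — 8 statements merged into one kernel-verified Lean document; each statement's English description precedes it below -/
import Mathlib

section
/- Let W ∈ ℝ^{n×n} be a nonnegative matrix such that either W or its transpose Wᵀ is weakly chained substochastic. Then W is convergent, i.e. every entry of W^k tends to 0 as k → ∞ (equivalently, the spectral radius of W is strictly less than 1). -/
open Filter Topology Matrix

/-- `W` is row substochastic: nonnegative entries with row sums at most one. -/
def RowSubstochastic {n : ℕ} (W : Matrix (Fin n) (Fin n) ℝ) : Prop :=
  (∀ i j, 0 ≤ W i j) ∧ ∀ i, ∑ j, W i j ≤ 1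

/-- `W` is weakly chained substochastic: it is row substochastic and for each `i`,
either the `i`-th row sum is `< 1`, or there is a directed path in the graph of `W`
from `i` to some `t` whose row sum is `< 1`. -/
def WeaklyChainedSubstochastic {n : ℕ} (W : Matrix (Fin n) (Fin n) ℝ) : Prop :=
  RowSubstochastic W ∧
    ∀ i, (∑ j, W i j < 1) ∨
      ∃ t, Relation.TransGen (fun a b => W a b ≠ 0) i t ∧ ∑ j, W t j < 1

section Aux

variable {n : ℕ} (W : Matrix (Fin n) (Fin n) ℝ)

lemma powNonneg (hpos : ∀ i j, 0 ≤ W i j) : ∀ k i j, 0 ≤ (W ^ k) i j := by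
  intro k
  induction k with
  | zero => intro i j; simp [Matrix.one_apply]; positivity
  | succ k ih =>
    intro i j
    rw [pow_succ, Matrix.mul_apply]
    exact Finset.sum_nonneg fun l _ => mul_nonneg (ih i l) (hpos l j)

lemma sZero : ∀ i, ∑ j, (W ^ 0) i j = 1 := by
  intro i; simp [Matrix.one_apply]

lemma sMono (hpos : ∀ i j, 0 ≤ W i j) (hrow : ∀ i, ∑ j, W i j ≤ 1) :
    ∀ k i, ∑ j, (W ^ (k + 1)) i j ≤ ∑ j, (W ^ k) i j := by
  intro k i
  have : ∑ j, (W ^ (k + 1)) i j = ∑ l, (W ^ k) i l * ∑ j, W l j := by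
    simp only [pow_succ, Matrix.mul_apply]
    rw [Finset.sum_comm]
    simp [Finset.mul_sum]
  rw [this]
  refine Finset.sum_le_sum fun l _ => ?_
  calc (W ^ k) i l * ∑ j, W l j ≤ (W ^ k) i l * 1 :=
        mul_le_mul_of_nonneg_left (hrow l) (powNonneg W hpos k i l)
    _ = (W ^ k) i l := mul_one _

lemma sAnti (hpos : ∀ i j, 0 ≤ W i j) (hrow : ∀ i, ∑ j, W i j ≤ 1) (i : Fin n) :
    Antitone (fun k => ∑ j, (W ^ k) i j) :=
  antitone_nat_of_succ_le fun k => sMono W hpos hrow k i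

lemma sLe1 (hpos : ∀ i j, 0 ≤ W i j) (hrow : ∀ i, ∑ j, W i j ≤ 1) :
    ∀ k i, ∑ j, (W ^ k) i j ≤ 1 := by
  intro k i
  calc ∑ j, (W ^ k) i j ≤ ∑ j, (W ^ 0) i j := sAnti W hpos hrow i (Nat.zero_le k)
    _ = 1 := sZero W i

lemma sStep (hpos : ∀ i j, 0 ≤ W i j) (hrow : ∀ i, ∑ j, W i j ≤ 1)
    {i t : Fin n} {k : ℕ} (hW : W i t ≠ 0) (ht : ∑ j, (W ^ k) t j < 1) :
    ∑ j, (W ^ (k + 1)) i j < 1 := by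
  have hexp : ∑ j, (W ^ (k + 1)) i j = ∑ l, W i l * ∑ j, (W ^ k) l j := by
    simp only [pow_succ', Matrix.mul_apply]
    rw [Finset.sum_comm]
    simp [Finset.mul_sum]
  have hWt : 0 < W i t := lt_of_le_of_ne (hpos i t) (Ne.symm hW)
  have key : ∑ l, W i l * ∑ j, (W ^ k) l j < ∑ l, W i l := by
    rw [← Finset.add_sum_erase _ _ (Finset.mem_univ t),
        ← Finset.add_sum_erase _ (fun l => W i l) (Finset.mem_univ t)]
    refine add_lt_add_of_lt_of_le ?_ ?_
    · calc W i t * ∑ j, (W ^ k) t j < W i t * 1 :=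
            mul_lt_mul_of_pos_left ht hWt
        _ = W i t := mul_one _
    · refine Finset.sum_le_sum fun l _ => ?_
      calc W i l * ∑ j, (W ^ k) l j ≤ W i l * 1 :=
            mul_le_mul_of_nonneg_left (sLe1 W hpos hrow k l) (hpos i l)
        _ = W i l := mul_one _
  rw [hexp]
  exact lt_of_lt_of_le key (hrow i)

lemma sDeficient (hW : WeaklyChainedSubstochastic W) :
    ∀ i, ∃ m, ∑ j, (W ^ m) i j < 1 := by
  obtain ⟨⟨hpos, hrow⟩, hchain⟩ := hW
  intro i
  rcases hchain i with h1 | ⟨t, hpath, ht⟩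
  · exact ⟨1, by rwa [pow_one]⟩
  · have ht1 : ∑ j, (W ^ 1) t j < 1 := by rwa [pow_one]
    clear hchain
    induction hpath using Relation.TransGen.head_induction_on with
    | single hab => exact ⟨2, sStep W hpos hrow hab ht1⟩
    | head hab _ ih =>
      obtain ⟨m, hm⟩ := ih
      exact ⟨m + 1, sStep W hpos hrow hab hm⟩

lemma keyLemma (hW : WeaklyChainedSubstochastic W) :
    ∀ i j, Tendsto (fun k => (W ^ k) i j) atTop (𝓝 0) := by
  obtain ⟨⟨hpos, hrow⟩, -⟩ := id hW
  intro i j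
  -- n > 0 since i : Fin n exists
  have hn : 0 < n := i.pos
  -- choose uniform N
  choose m hm using sDeficient W hW
  set N : ℕ := (Finset.univ.sup m) + 1 with hN
  have hNpos : 0 < N := Nat.succ_pos _
  have hNall : ∀ l, ∑ j, (W ^ N) l j < 1 := fun l =>
    lt_of_le_of_lt (sAnti W hpos hrow l (le_trans (Finset.le_sup (Finset.mem_univ l)) (Nat.le_succ _))) (hm l)
  have hne : (Finset.univ : Finset (Fin n)).Nonempty := ⟨i, Finset.mem_univ i⟩
  set c : ℝ := Finset.univ.sup' hne (fun l => ∑ j, (W ^ N) l j) with hc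
  have hcN : ∀ l, ∑ j, (W ^ N) l j ≤ c := by
    intro l; rw [hc]; exact Finset.le_sup' (fun l => ∑ j, (W ^ N) l j) (Finset.mem_univ l)
  have hc1 : c < 1 := by
    rw [hc, Finset.sup'_lt_iff]
    exact fun l _ => hNall l
  have hc0 : 0 ≤ c := le_trans (Finset.sum_nonneg fun l _ => powNonneg W hpos N i l) (hcN i)
  -- geometric bound: s (N*m) ≤ c^m
  have geo : ∀ q l, ∑ j, (W ^ (N * q)) l j ≤ c ^ q := by
    intro q
    induction q with
    | zero => intro l; rw [Nat.mul_zero, pow_zero, pow_zero]; simp [Matrix.one_apply]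
    | succ q ih =>
      intro l
      have hsplit : ∑ j, (W ^ (N * (q + 1))) l j
          = ∑ a, (W ^ N) l a * ∑ j, (W ^ (N * q)) a j := by
        have : W ^ (N * (q + 1)) = W ^ N * W ^ (N * q) := by
          rw [← pow_add]; ring_nf
        rw [this]
        simp only [Matrix.mul_apply]
        rw [Finset.sum_comm]
        simp [Finset.mul_sum]
      rw [hsplit, pow_succ]
      calc ∑ a, (W ^ N) l a * ∑ j, (W ^ (N * q)) a j
          ≤ ∑ a, (W ^ N) l a * c ^ q := by
            refine Finset.sum_le_sum fun a _ => ?_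
            exact mul_le_mul_of_nonneg_left (ih a) (powNonneg W hpos N l a)
        _ = (∑ a, (W ^ N) l a) * c ^ q := by rw [← Finset.sum_mul]
        _ ≤ c * c ^ q := mul_le_mul_of_nonneg_right (hcN l) (pow_nonneg hc0 q)
        _ = c ^ q * c := mul_comm _ _
  -- bound entries
  have hbound : ∀ k, (W ^ k) i j ≤ c ^ (k / N) := by
    intro k
    calc (W ^ k) i j ≤ ∑ j', (W ^ k) i j' :=
          Finset.single_le_sum (fun l _ => powNonneg W hpos k i l) (Finset.mem_univ j)
      _ ≤ ∑ j', (W ^ (N * (k / N))) i j' :=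
          sAnti W hpos hrow i (by rw [mul_comm]; exact Nat.div_mul_le_self k N)
      _ ≤ c ^ (k / N) := geo (k / N) i
  have hdiv : Tendsto (fun k : ℕ => k / N) atTop atTop :=
    Filter.tendsto_atTop_atTop.mpr fun b =>
      ⟨b * N, fun a ha => (Nat.le_div_iff_mul_le hNpos).mpr ha⟩
  have hgeo : Tendsto (fun k : ℕ => c ^ (k / N)) atTop (𝓝 0) :=
    (tendsto_pow_atTop_nhds_zero_of_lt_one hc0 hc1).comp hdiv
  exact squeeze_zero (fun k => powNonneg W hpos k i j) hbound hgeo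

end Aux

/-- If the nonnegative matrix `W`, or its transpose, is weakly chained substochastic,
then `W` is convergent: every entry of `W ^ k` tends to `0` as `k → ∞`. -/
theorem stmt0 {n : ℕ} (W : Matrix (Fin n) (Fin n) ℝ)
    (hpos : ∀ i j, 0 ≤ W i j)
    (h : WeaklyChainedSubstochastic W ∨ WeaklyChainedSubstochastic Wᵀ) :
    ∀ i j, Tendsto (fun k => (W ^ k) i j) atTop (𝓝 0) := by
  rcases h with h | h
  · exact keyLemma W h
  · intro i j
    have := keyLemma Wᵀ h j i
    have heq : ∀ k, (Wᵀ ^ k) j i = (W ^ k) i j := by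
      intro k
      rw [← Matrix.transpose_pow]
      rfl
    simpa [heq] using this
end

section
/- Let f_1, …, f_n : ℝ → ℝ be Lipschitz continuous with Lipschitz constants β_1, …, β_n, let W ∈ ℝ^{n×n} and ε ∈ ℝ^n, and define T : ℝ^n → ℝ^n by (Tx)_j = f_j(Σ_{i=1}^n x_i w_{ij} + ε_j). Then for all x, x̂ ∈ ℝ^n and all k ∈ ℕ, the componentwise inequality |T^k x − T^k x̂| ≤ |x − x̂| (|W| diag(β))^k holds, where the left side is the vector of componentwise absolute values and the right side is the row vector |x − x̂| multiplied by the k-th power of the matrix |W| diag(β). -/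
/-!
A map of the form `x ↦ (f_j((x W)_j + ε_j))_j` with Lipschitz `f_j` satisfies the one-step
bound `|T x - T y| ≤ |x - y| (|W| diag β)` componentwise. Since `|W| diag β` has nonnegative
entries, right multiplication by it is monotone for the componentwise order, so the one-step
bound iterates to the bound with the `k`-th power.
-/

open Matrix

variable {ι κ R : Type*} [Fintype ι] [CommRing R] [LinearOrder R] [IsStrictOrderedRing R]

lemma nonneg_of_forall_abs_sub_le_mul {g : R → R} {b : R} (hg : ∀ s t, |g s - g t| ≤ b * |s - t|) :
    0 ≤ b := by
  simpa using (abs_nonneg _).trans (hg 1 0)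

lemma vecMul_le_vecMul_of_nonneg {u v : ι → R} {M : Matrix ι κ R} (huv : u ≤ v)
    (hM : ∀ i j, 0 ≤ M i j) : u ᵥ* M ≤ v ᵥ* M :=
  fun j => dotProduct_le_dotProduct_of_nonneg_right huv fun i => hM i j

lemma abs_vecMul_le (v : ι → R) (M : Matrix ι κ R) :
    |v ᵥ* M| ≤ |v| ᵥ* of fun i j => |M i j| := fun j => by
  simpa only [vecMul, dotProduct, Pi.abs_apply, of_apply, abs_mul]
    using Finset.abs_sum_le_sum_abs (fun i => v i * M i j) Finset.univ

lemma abs_sub_le_vecMul_of_lipschitz [Fintype κ] [DecidableEq κ] {f : κ → R → R} {β : κ → R}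
    (hf : ∀ j s t, |f j s - f j t| ≤ β j * |s - t|) (W : Matrix ι κ R) (ε : κ → R)
    (x y : ι → R) :
    |(fun j => f j ((x ᵥ* W) j + ε j)) - fun j => f j ((y ᵥ* W) j + ε j)| ≤
      |x - y| ᵥ* ((of fun i j => |W i j|) * diagonal β) := fun j => by
  have hβ : 0 ≤ β j := nonneg_of_forall_abs_sub_le_mul (hf j)
  calc |f j ((x ᵥ* W) j + ε j) - f j ((y ᵥ* W) j + ε j)|
      ≤ β j * |((x - y) ᵥ* W) j| :=
        (hf j _ _).trans_eq (by rw [add_sub_add_right_eq_sub, sub_vecMul, Pi.sub_apply])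
    _ ≤ β j * (|x - y| ᵥ* of fun i j => |W i j|) j :=
        mul_le_mul_of_nonneg_left (abs_vecMul_le (x - y) W j) hβ
    _ = (|x - y| ᵥ* ((of fun i j => |W i j|) * diagonal β)) j := by
        rw [← vecMul_vecMul, vecMul_diagonal, mul_comm]

lemma abs_iterate_sub_le_vecMul_pow [DecidableEq ι] {T : (ι → R) → ι → R} {M : Matrix ι ι R}
    (hM : ∀ i j, 0 ≤ M i j) (hT : ∀ x y, |T x - T y| ≤ |x - y| ᵥ* M) (k : ℕ) (x y : ι → R) :
    |T^[k] x - T^[k] y| ≤ |x - y| ᵥ* M ^ k := by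
  induction k with
  | zero => simp
  | succ k ih =>
    rw [Function.iterate_succ_apply', Function.iterate_succ_apply', pow_succ, ← vecMul_vecMul]
    exact (hT _ _).trans (vecMul_le_vecMul_of_nonneg ih hM)

/-- If each `f j` is Lipschitz with constant `β j` and `(T x) j = f j (∑ i, x i * W i j + ε j)`,
then componentwise `|T^k x − T^k x̂| ≤ |x − x̂| (|W| diag β)^k`, where vectors are row
vectors and `|W|` is the entrywise absolute value of `W`. -/
theorem stmt2 {n : ℕ} (f : Fin n → ℝ → ℝ) (β : Fin n → ℝ)
    (W : Matrix (Fin n) (Fin n) ℝ) (ε : Fin n → ℝ)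
    (hlip : ∀ j, ∀ s t : ℝ, |f j s - f j t| ≤ β j * |s - t|)
    (T : (Fin n → ℝ) → Fin n → ℝ)
    (hT : ∀ x j, T x j = f j (∑ i, x i * W i j + ε j)) :
    ∀ (k : ℕ) (x x' : Fin n → ℝ) (j : Fin n),
      |T^[k] x j - T^[k] x' j| ≤
        Matrix.vecMul (fun i => |x i - x' i|)
          (((Matrix.of fun i j => |W i j|) * Matrix.diagonal β) ^ k) j := by
  intro k x x' j
  have hT_eq : ∀ x, T x = fun j => f j ((x ᵥ* W) j + ε j) := fun x => funext (hT x)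
  have hM : ∀ i j, 0 ≤ ((of fun i j => |W i j|) * diagonal β) i j := fun i j => by
    rw [mul_diagonal, of_apply]
    exact mul_nonneg (abs_nonneg _) (nonneg_of_forall_abs_sub_le_mul (hlip j))
  refine abs_iterate_sub_le_vecMul_pow hM (fun y y' => ?_) k x x' j
  rw [hT_eq, hT_eq]
  exact abs_sub_le_vecMul_of_lipschitz hlip W ε y y'
end

section
/- Let f_1, …, f_n : ℝ → ℝ be Lipschitz continuous with Lipschitz constants β_1, …, β_n, and let W ∈ ℝ^{n×n} satisfy r(|W| diag(β)) < 1, where r denotes the spectral radius. Then for every ε ∈ ℝ^n there exists exactly one equilibrium, i.e. exactly one x ∈ ℝ^n with x_j = f_j(Σ_{i=1}^n x_i w_{ij} + ε_j) for all j. -/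
open scoped Matrix NNReal ENNReal

attribute [local instance] Matrix.linftyOpNormedRing Matrix.linftyOpNormedAlgebra

/-- The spectral radius of a real square matrix: the supremum of the moduli of the
(complex) eigenvalues of the matrix, viewed as a complex matrix. -/
noncomputable def specRad {n : ℕ} (A : Matrix (Fin n) (Fin n) ℝ) : ℝ :=
  sSup {r : ℝ | ∃ μ : ℂ, μ ∈ spectrum ℂ (A.map (Complex.ofReal : ℝ → ℂ)) ∧ r = ‖μ‖}

lemma spectrum_transpose {n : ℕ} (M : Matrix (Fin n) (Fin n) ℂ) :
    spectrum ℂ Mᵀ = spectrum ℂ M := by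
  ext z
  have h : algebraMap ℂ (Matrix (Fin n) (Fin n) ℂ) z - Mᵀ
      = (algebraMap ℂ (Matrix (Fin n) (Fin n) ℂ) z - M)ᵀ := by
    rw [Matrix.transpose_sub, Matrix.algebraMap_eq_diagonal, Matrix.diagonal_transpose]
  simp only [spectrum.mem_iff, not_iff_not, Matrix.isUnit_iff_isUnit_det, h,
    Matrix.det_transpose]

section aux
variable {n : ℕ} [Nonempty (Fin n)]

local instance : CompleteSpace (Matrix (Fin n) (Fin n) ℂ) :=
  FiniteDimensional.complete ℂ _

/-- key norm fact: if specRad A < 1 then ∃ k ≥ 1 with ‖((A^k)ᵀ).map ofReal‖₊ < 1 -/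
lemma exists_pow_nnnorm_lt {A : Matrix (Fin n) (Fin n) ℝ} (hr : specRad A < 1) :
    ∃ k : ℕ, 1 ≤ k ∧ ‖((A ^ k)ᵀ).map (Complex.ofReal : ℝ → ℂ)‖₊ < 1 := by
  set B : Matrix (Fin n) (Fin n) ℂ := (Aᵀ).map (Complex.ofReal : ℝ → ℂ) with hB
  have hBpow : ∀ k : ℕ, B ^ k = ((A ^ k)ᵀ).map (Complex.ofReal : ℝ → ℂ) := by
    intro k
    have : B = Complex.ofRealHom.mapMatrix Aᵀ := rfl
    rw [this, ← map_pow, Matrix.transpose_pow]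
    rfl
  have hσ : spectrum ℂ B = spectrum ℂ (A.map (Complex.ofReal : ℝ → ℂ)) := by
    have : B = (A.map (Complex.ofReal : ℝ → ℂ))ᵀ := by
      ext i j; simp [hB, Matrix.transpose_apply]
    rw [this, spectrum_transpose]
  -- spectral radius < 1
  have hsr : spectralRadius ℂ B < 1 := by
    have hlt : ∀ z ∈ spectrum ℂ B, ‖z‖₊ < 1 := by
      intro z hz
      rw [hσ] at hz
      have hbdd : BddAbove {r : ℝ | ∃ μ : ℂ,
          μ ∈ spectrum ℂ (A.map (Complex.ofReal : ℝ → ℂ)) ∧ r = ‖μ‖} := by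
        have himg : {r : ℝ | ∃ μ : ℂ,
            μ ∈ spectrum ℂ (A.map (Complex.ofReal : ℝ → ℂ)) ∧ r = ‖μ‖}
            = (fun μ : ℂ => ‖μ‖) '' spectrum ℂ (A.map (Complex.ofReal : ℝ → ℂ)) := by
          ext r; simp [Set.mem_image, eq_comm]
        rw [himg]
        exact ((spectrum.isCompact _).image continuous_norm).bddAbove
      have hle : ‖z‖ ≤ specRad A :=
        le_csSup hbdd ⟨z, hz, rfl⟩
      have : ‖z‖ < 1 := by linarith
      exact_mod_cast this
    simpa using spectrum.spectralRadius_lt_of_forall_lt (a := B) (r := 1) hlt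
  -- Gelfand
  have hG := spectrum.pow_nnnorm_pow_one_div_tendsto_nhds_spectralRadius B
  have hev : ∀ᶠ k : ℕ in Filter.atTop,
      (‖B ^ k‖₊ : ℝ≥0∞) ^ (1 / (k : ℝ)) < 1 :=
    hG.eventually_lt_const hsr
  obtain ⟨k, hklt, hk1⟩ := (hev.and (Filter.eventually_ge_atTop 1)).exists
  refine ⟨k, hk1, ?_⟩
  rw [← hBpow]
  by_contra hge
  push_neg at hge
  have h1 : (1 : ℝ≥0∞) ≤ (‖B ^ k‖₊ : ℝ≥0∞) := by exact_mod_cast hge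
  have : (1 : ℝ≥0∞) ≤ (‖B ^ k‖₊ : ℝ≥0∞) ^ (1 / (k : ℝ)) := by
    calc (1 : ℝ≥0∞) = 1 ^ (1 / (k : ℝ)) := by rw [ENNReal.one_rpow]
    _ ≤ _ := ENNReal.rpow_le_rpow h1 (by positivity)
  exact absurd hklt (not_lt.mpr this)

end aux

/-- If each `f j` is Lipschitz with constant `β j` and `r(|W| diag β) < 1`, then for every
shock vector `ε` there is exactly one equilibrium `x`, i.e. exactly one `x` with
`x j = f j (∑ i, x i * W i j + ε j)` for all `j`. -/
theorem stmt3 {n : ℕ} (f : Fin n → ℝ → ℝ) (β : Fin n → ℝ)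
    (W : Matrix (Fin n) (Fin n) ℝ)
    (hlip : ∀ j, ∀ s t : ℝ, |f j s - f j t| ≤ β j * |s - t|)
    (hr : specRad ((Matrix.of fun i j => |W i j|) * Matrix.diagonal β) < 1) :
    ∀ ε : Fin n → ℝ, ∃! x : Fin n → ℝ, ∀ j, x j = f j (∑ i, x i * W i j + ε j) := by
  intro ε
  rcases Nat.eq_zero_or_pos n with hn | hn
  · haveI : IsEmpty (Fin n) := by subst hn; infer_instance
    exact ⟨fun i => isEmptyElim i, fun j => isEmptyElim j,
      fun y _ => funext fun j => isEmptyElim j⟩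
  haveI : Nonempty (Fin n) := ⟨⟨0, hn⟩⟩
  have hβ : ∀ j, 0 ≤ β j := by
    intro j
    have h := hlip j 1 0
    simp only [sub_zero, abs_one, mul_one] at h
    exact le_trans (abs_nonneg _) h
  set A : Matrix (Fin n) (Fin n) ℝ :=
    (Matrix.of fun i j => |W i j|) * Matrix.diagonal β with hA
  have hAentry : ∀ i j, A i j = |W i j| * β j := by
    intro i j
    simp [hA, Matrix.mul_diagonal]
  have hApos : ∀ k : ℕ, ∀ i j, 0 ≤ (A ^ k) i j := by
    intro k
    induction k with
    | zero => intro i j; rw [pow_zero, Matrix.one_apply]; split <;> norm_num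
    | succ k ih =>
      intro i j
      rw [pow_succ, Matrix.mul_apply]
      exact Finset.sum_nonneg fun l _ => mul_nonneg (ih i l)
        (by rw [hAentry]; exact mul_nonneg (abs_nonneg _) (hβ j))
  obtain ⟨k, hk1, hknorm⟩ := exists_pow_nnnorm_lt (A := A) hr
  -- column sums of A^k bounded by K
  set K : ℝ≥0 := ‖((A ^ k)ᵀ).map (Complex.ofReal : ℝ → ℂ)‖₊ with hK
  have hcol : ∀ j, ∑ i, (A ^ k) i j ≤ (K : ℝ) := by
    intro j
    have h1 : ∑ i, ‖(((A ^ k)ᵀ).map (Complex.ofReal : ℝ → ℂ)) j i‖₊ ≤ K := by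
      rw [hK, Matrix.linfty_opNNNorm_def]
      exact Finset.le_sup (f := fun i => ∑ l, ‖(((A ^ k)ᵀ).map (Complex.ofReal : ℝ → ℂ)) i l‖₊) (Finset.mem_univ j)
    have h2 : ∑ i, (A ^ k) i j = ((∑ i, ‖(((A ^ k)ᵀ).map (Complex.ofReal : ℝ → ℂ)) j i‖₊ : ℝ≥0) : ℝ) := by
      push_cast
      refine Finset.sum_congr rfl fun i _ => ?_
      rw [Matrix.map_apply, Complex.norm_real, Real.norm_eq_abs, Matrix.transpose_apply,
        abs_of_nonneg (hApos k i j)]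
    rw [h2]
    exact_mod_cast h1
  -- the map
  set Φ : (Fin n → ℝ) → (Fin n → ℝ) :=
    fun x j => f j (∑ i, x i * W i j + ε j) with hΦ
  have hstep : ∀ x y : Fin n → ℝ, ∀ j, |Φ x j - Φ y j| ≤ ∑ i, A i j * |x i - y i| := by
    intro x y j
    calc |Φ x j - Φ y j| ≤ β j * |(∑ i, x i * W i j + ε j) - (∑ i, y i * W i j + ε j)| :=
          hlip j _ _
      _ = β j * |∑ i, (x i - y i) * W i j| := by
          rw [add_sub_add_right_eq_sub, ← Finset.sum_sub_distrib]
          simp_rw [← sub_mul]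
      _ ≤ β j * ∑ i, |x i - y i| * |W i j| := by
          refine mul_le_mul_of_nonneg_left ?_ (hβ j)
          calc |∑ i, (x i - y i) * W i j| ≤ ∑ i, |(x i - y i) * W i j| :=
                Finset.abs_sum_le_sum_abs _ _
            _ = ∑ i, |x i - y i| * |W i j| := by simp_rw [abs_mul]
      _ = ∑ i, A i j * |x i - y i| := by
          rw [Finset.mul_sum]
          exact Finset.sum_congr rfl fun i _ => by rw [hAentry]; ring
  have hiter : ∀ m : ℕ, ∀ x y : Fin n → ℝ, ∀ j,
      |Φ^[m] x j - Φ^[m] y j| ≤ ∑ i, (A ^ m) i j * |x i - y i| := by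
    intro m
    induction m with
    | zero =>
      intro x y j
      simp only [Function.iterate_zero, id_eq, pow_zero]
      refine le_of_eq ?_
      rw [show ∑ i, (1 : Matrix (Fin n) (Fin n) ℝ) i j * |x i - y i|
          = |x j - y j| from ?_]
      simp [Matrix.one_apply, Finset.sum_ite_eq, ite_mul]
    | succ m ih =>
      intro x y j
      rw [Function.iterate_succ_apply', Function.iterate_succ_apply']
      calc |Φ (Φ^[m] x) j - Φ (Φ^[m] y) j|
          ≤ ∑ i, A i j * |Φ^[m] x i - Φ^[m] y i| := hstep _ _ j
        _ ≤ ∑ i, A i j * ∑ l, (A ^ m) l i * |x l - y l| := by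
            refine Finset.sum_le_sum fun i _ => ?_
            exact mul_le_mul_of_nonneg_left (ih x y i) (by rw [hAentry]; exact mul_nonneg (abs_nonneg _) (hβ j))
        _ = ∑ l, (A ^ (m + 1)) l j * |x l - y l| := by
            simp_rw [Finset.mul_sum]
            rw [Finset.sum_comm]
            refine Finset.sum_congr rfl fun l _ => ?_
            rw [pow_succ, Matrix.mul_apply, Finset.sum_mul]
            exact Finset.sum_congr rfl fun i _ => by ring
  -- Φ^[k] is a contraction with constant K
  have hlipk : LipschitzWith K (Φ^[k]) := by
    refine LipschitzWith.of_dist_le_mul fun x y => ?_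
    rw [dist_pi_le_iff (mul_nonneg K.coe_nonneg dist_nonneg)]
    intro j
    rw [Real.dist_eq]
    calc |Φ^[k] x j - Φ^[k] y j| ≤ ∑ i, (A ^ k) i j * |x i - y i| := hiter k x y j
      _ ≤ ∑ i, (A ^ k) i j * dist x y := by
          refine Finset.sum_le_sum fun i _ => ?_
          refine mul_le_mul_of_nonneg_left ?_ (hApos k i j)
          rw [← Real.dist_eq]
          exact dist_le_pi_dist x y i
      _ = (∑ i, (A ^ k) i j) * dist x y := by rw [Finset.sum_mul]
      _ ≤ (K : ℝ) * dist x y :=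
          mul_le_mul_of_nonneg_right (hcol j) dist_nonneg
  have hc : ContractingWith K (Φ^[k]) := ⟨hknorm, hlipk⟩
  set x₀ : Fin n → ℝ := hc.fixedPoint (Φ^[k]) with hx₀
  have hfix : Function.IsFixedPt Φ x₀ := hc.isFixedPt_fixedPoint_iterate
  refine ⟨x₀, ?_, ?_⟩
  · intro j
    conv_lhs => rw [← hfix]
  · intro y hy
    have hyfix : Function.IsFixedPt Φ y := funext fun j => (hy j).symm
    exact hc.fixedPoint_unique (hyfix.iterate k)
end

section
/- Let f_1, …, f_n : ℝ → ℝ be Lipschitz continuous with Lipschitz constants β_1, …, β_n, let W ∈ ℝ^{n×n} satisfy r(|W| diag(β)) < 1, let ε ∈ ℝ^n, and define T : ℝ^n → ℝ^n by (Tx)_j = f_j(Σ_{i=1}^n x_i w_{ij} + ε_j). Then (i) T is globally stable: T has a unique fixed point x* ∈ ℝ^n and T^k x → x* as k → ∞ for every x ∈ ℝ^n; and (ii) for every k ∈ ℕ and every x ∈ ℝ^n, ‖T^{k+1} x − T^k x‖_∞ ≤ ‖(|W| diag(β))^k‖ · ‖Tx − x‖_∞, where ‖·‖ on matrices is the operator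 norm induced by the sup norm ‖·‖_∞ on ℝ^n. -/
set_option synthInstance.maxHeartbeats 1000000
set_option maxHeartbeats 1000000

open Filter Topology

noncomputable def opNormInf {n : ℕ} (A : Matrix (Fin n) (Fin n) ℝ) : ℝ :=
  sSup {c : ℝ | ∃ v : Fin n → ℝ, ‖v‖ ≤ 1 ∧ c = ‖Matrix.vecMul v A‖}

lemma opNormInf_bddAbove {n : ℕ} (B : Matrix (Fin n) (Fin n) ℝ) :
    BddAbove {c : ℝ | ∃ v : Fin n → ℝ, ‖v‖ ≤ 1 ∧ c = ‖Matrix.vecMul v B‖} := by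
  refine ⟨∑ i, ∑ j, |B i j|, ?_⟩
  rintro c ⟨v, hv, rfl⟩
  have hC : (0:ℝ) ≤ ∑ i, ∑ j, |B i j| :=
    Finset.sum_nonneg fun i _ => Finset.sum_nonneg fun j _ => abs_nonneg _
  rw [pi_norm_le_iff_of_nonneg hC]
  intro j
  have : ‖Matrix.vecMul v B j‖ = |∑ i, v i * B i j| := by
    simp [Matrix.vecMul, dotProduct, Real.norm_eq_abs]
  rw [this]
  calc |∑ i, v i * B i j| ≤ ∑ i, |v i * B i j| := Finset.abs_sum_le_sum_abs _ _
    _ ≤ ∑ i, |B i j| := by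
        refine Finset.sum_le_sum fun i _ => ?_
        rw [abs_mul]
        have h1 : |v i| ≤ 1 := le_trans (norm_le_pi_norm v i) hv
        nlinarith [abs_nonneg (B i j), abs_nonneg (v i)]
    _ ≤ ∑ i, ∑ j', |B i j'| := by
        refine Finset.sum_le_sum fun i _ => ?_
        exact Finset.single_le_sum (f := fun j' => |B i j'|) (fun j' _ => abs_nonneg _) (Finset.mem_univ j)

lemma mem_opNormInf_set {n : ℕ} (B : Matrix (Fin n) (Fin n) ℝ) (v : Fin n → ℝ) (hv : ‖v‖ ≤ 1) :
    ‖Matrix.vecMul v B‖ ≤ opNormInf B :=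
  le_csSup (opNormInf_bddAbove B) ⟨v, hv, rfl⟩

lemma opNormInf_nonneg {n : ℕ} (B : Matrix (Fin n) (Fin n) ℝ) : 0 ≤ opNormInf B := by
  have := mem_opNormInf_set B 0 (by simp)
  simpa [Matrix.zero_vecMul] using le_trans (norm_nonneg _) this

lemma norm_vecMul_le {n : ℕ} (B : Matrix (Fin n) (Fin n) ℝ) (v : Fin n → ℝ) :
    ‖Matrix.vecMul v B‖ ≤ opNormInf B * ‖v‖ := by
  rcases eq_or_ne v 0 with rfl | hv
  · simp [Matrix.zero_vecMul]
  · have hnv : 0 < ‖v‖ := norm_pos_iff.mpr hv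
    have hu : ‖(‖v‖⁻¹ • v)‖ ≤ 1 := by
      rw [norm_smul, norm_inv, norm_norm]
      rw [inv_mul_cancel₀ hnv.ne']
    have h := mem_opNormInf_set B _ hu
    rw [Matrix.smul_vecMul, norm_smul, norm_inv, norm_norm] at h
    calc ‖Matrix.vecMul v B‖ = ‖v‖ * (‖v‖⁻¹ * ‖Matrix.vecMul v B‖) := by
          field_simp
      _ ≤ ‖v‖ * opNormInf B := by
          exact mul_le_mul_of_nonneg_left h hnv.le
      _ = opNormInf B * ‖v‖ := mul_comm _ _

attribute [local instance] Matrix.linftyOpNormedRing Matrix.linftyOpNormedAlgebra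

instance matComplete {n : ℕ} : CompleteSpace (Matrix (Fin n) (Fin n) ℂ) :=
  inferInstance

lemma map_pow_ofReal {n : ℕ} (A : Matrix (Fin n) (Fin n) ℝ) (k : ℕ) :
    (A ^ k).map (Complex.ofReal : ℝ → ℂ) = (A.map (Complex.ofReal : ℝ → ℂ)) ^ k := by
  induction k with
  | zero =>
    ext i j
    by_cases h : i = j <;> simp [Matrix.map_apply, Matrix.one_apply, h]
  | succ k ih =>
    ext i j
    rw [pow_succ, pow_succ, ← ih]
    simp only [Matrix.map_apply, Matrix.mul_apply]
    push_cast
    rfl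

lemma abs_entry_le_norm {n : ℕ} (B : Matrix (Fin n) (Fin n) ℝ) (i j : Fin n) :
    |B i j| ≤ ‖B.map (Complex.ofReal : ℝ → ℂ)‖ := by
  have key : ‖(B.map (Complex.ofReal : ℝ → ℂ)) i j‖₊ ≤ ‖B.map (Complex.ofReal : ℝ → ℂ)‖₊ := by
    calc ‖(B.map (Complex.ofReal : ℝ → ℂ)) i j‖₊
        ≤ ∑ j', ‖(B.map (Complex.ofReal : ℝ → ℂ)) i j'‖₊ :=
          Finset.single_le_sum (f := fun j' => ‖(B.map (Complex.ofReal : ℝ → ℂ)) i j'‖₊)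
            (fun _ _ => zero_le) (Finset.mem_univ j)
      _ ≤ ‖B.map (Complex.ofReal : ℝ → ℂ)‖₊ := by
          rw [Matrix.linfty_opNNNorm_def]
          exact Finset.le_sup (f := fun i => ∑ j', ‖(B.map (Complex.ofReal : ℝ → ℂ)) i j'‖₊) (Finset.mem_univ i)
  have h2 : ‖(B.map (Complex.ofReal : ℝ → ℂ)) i j‖ ≤ ‖B.map (Complex.ofReal : ℝ → ℂ)‖ := by
    exact_mod_cast key
  simpa [Matrix.map_apply, Complex.norm_real, Real.norm_eq_abs] using h2

lemma opNormInf_le_card_mul_norm {n : ℕ} (B : Matrix (Fin n) (Fin n) ℝ) :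
    opNormInf B ≤ (n : ℝ) * ‖B.map (Complex.ofReal : ℝ → ℂ)‖ := by
  refine csSup_le ⟨‖Matrix.vecMul (0 : Fin n → ℝ) B‖, ⟨0, by simp, rfl⟩⟩ ?_
  rintro c ⟨v, hv, rfl⟩
  have hC : (0:ℝ) ≤ ‖B.map (Complex.ofReal : ℝ → ℂ)‖ := norm_nonneg _
  rw [pi_norm_le_iff_of_nonneg (mul_nonneg (Nat.cast_nonneg n) hC)]
  intro j
  have : ‖Matrix.vecMul v B j‖ = |∑ i, v i * B i j| := by
    simp [Matrix.vecMul, dotProduct, Real.norm_eq_abs]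
  rw [this]
  calc |∑ i, v i * B i j| ≤ ∑ i, |v i * B i j| := Finset.abs_sum_le_sum_abs _ _
    _ ≤ ∑ _i : Fin n, ‖B.map (Complex.ofReal : ℝ → ℂ)‖ := by
        refine Finset.sum_le_sum fun i _ => ?_
        rw [abs_mul]
        have h1 : |v i| ≤ 1 := le_trans (norm_le_pi_norm v i) hv
        have h2 := abs_entry_le_norm B i j
        nlinarith [abs_nonneg (B i j), abs_nonneg (v i)]
    _ = (n : ℝ) * ‖B.map (Complex.ofReal : ℝ → ℂ)‖ := by
        simp [Finset.sum_const, Finset.card_univ]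

lemma exists_geom {n : ℕ} (A : Matrix (Fin n) (Fin n) ℝ) (hA : specRad A < 1) :
    ∃ ρ : ℝ, 0 ≤ ρ ∧ ρ < 1 ∧ ∀ᶠ k in atTop, opNormInf (A ^ k) ≤ (n : ℝ) * ρ ^ k := by
  set M : Matrix (Fin n) (Fin n) ℂ := A.map (Complex.ofReal : ℝ → ℂ) with hM
  have hbdd : BddAbove {r : ℝ | ∃ μ : ℂ, μ ∈ spectrum ℂ M ∧ r = ‖μ‖} := by
    refine ⟨‖M‖ * ‖(1 : Matrix (Fin n) (Fin n) ℂ)‖, ?_⟩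
    rintro r ⟨μ, hμ, rfl⟩
    simpa using spectrum.norm_le_norm_mul_of_mem hμ
  have hsr : spectralRadius ℂ M < 1 := by
    have hle : spectralRadius ℂ M ≤ ENNReal.ofReal (specRad A) := by
      rw [spectralRadius]
      refine iSup₂_le fun μ hμ => ?_
      have h1 : ‖μ‖ ≤ specRad A := le_csSup hbdd ⟨μ, hμ, rfl⟩
      have h2 : (‖μ‖₊ : ENNReal) = ENNReal.ofReal ‖μ‖ := by
        exact (ENNReal.ofReal_eq_coe_nnreal (norm_nonneg μ)).symm
      rw [h2]
      exact ENNReal.ofReal_le_ofReal h1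
    exact lt_of_le_of_lt hle (ENNReal.ofReal_lt_one.mpr hA)
  obtain ⟨p, hρ1, hρ2⟩ := exists_between hsr
  have hρtop : p ≠ ⊤ := hρ2.ne_top
  refine ⟨p.toReal, ENNReal.toReal_nonneg, ?_, ?_⟩
  · rw [← ENNReal.toReal_one]
    exact (ENNReal.toReal_lt_toReal hρtop (by simp)).mpr hρ2
  · have hG := spectrum.pow_nnnorm_pow_one_div_tendsto_nhds_spectralRadius M
    have ev1 : ∀ᶠ k : ℕ in atTop, (‖M ^ k‖₊ : ENNReal) ^ (1 / (k:ℝ)) < p :=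
      hG.eventually_lt_const hρ1
    filter_upwards [ev1, eventually_ge_atTop 1] with k h1 h2
    have hk0 : (k : ℝ) ≠ 0 := Nat.cast_ne_zero.mpr (by omega)
    have hx : (‖M ^ k‖₊ : ENNReal) ≤ p ^ k := by
      have h3 := ENNReal.rpow_le_rpow h1.le (Nat.cast_nonneg k : (0:ℝ) ≤ (k:ℝ))
      rwa [← ENNReal.rpow_mul, one_div, inv_mul_cancel₀ hk0, ENNReal.rpow_one,
        ENNReal.rpow_natCast] at h3
    have hMk : ‖M ^ k‖ ≤ p.toReal ^ k := by
      have h4 := ENNReal.toReal_mono (ENNReal.pow_ne_top hρtop) hx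
      rwa [ENNReal.coe_toReal, ENNReal.toReal_pow, coe_nnnorm] at h4
    calc opNormInf (A ^ k) ≤ (n : ℝ) * ‖(A ^ k).map (Complex.ofReal : ℝ → ℂ)‖ :=
          opNormInf_le_card_mul_norm _
      _ = (n : ℝ) * ‖M ^ k‖ := by rw [map_pow_ofReal]
      _ ≤ (n : ℝ) * p.toReal ^ k := by
          exact mul_le_mul_of_nonneg_left hMk (Nat.cast_nonneg n)

/-- Under the eventually contracting assumption `r(|W| diag β) < 1`:
(i) the map `T x = f (x W + ε)` is globally stable (it has a unique fixed point to which
all iterates converge), and (ii) `‖T^[k+1] x − T^[k] x‖∞ ≤ ‖(|W| diag β)^k‖ ‖T x − x‖∞`. -/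
theorem stmt4 {n : ℕ} (f : Fin n → ℝ → ℝ) (β : Fin n → ℝ)
    (W : Matrix (Fin n) (Fin n) ℝ) (ε : Fin n → ℝ)
    (hlip : ∀ j, ∀ s t : ℝ, |f j s - f j t| ≤ β j * |s - t|)
    (hr : specRad ((Matrix.of fun i j => |W i j|) * Matrix.diagonal β) < 1)
    (T : (Fin n → ℝ) → Fin n → ℝ)
    (hT : ∀ x j, T x j = f j (∑ i, x i * W i j + ε j)) :
    (∃ xstar : Fin n → ℝ, T xstar = xstar ∧ (∀ y, T y = y → y = xstar) ∧
      ∀ x : Fin n → ℝ, Tendsto (fun k => T^[k] x) atTop (𝓝 xstar)) ∧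
    ∀ (k : ℕ) (x : Fin n → ℝ),
      ‖T^[k + 1] x - T^[k] x‖ ≤
        opNormInf (((Matrix.of fun i j => |W i j|) * Matrix.diagonal β) ^ k) * ‖T x - x‖ := by
  set A : Matrix (Fin n) (Fin n) ℝ := (Matrix.of fun i j => |W i j|) * Matrix.diagonal β with hA
  have hβ : ∀ j, 0 ≤ β j := by
    intro j
    have h := hlip j 1 0
    simp only [sub_zero, abs_one, mul_one] at h
    exact le_trans (abs_nonneg _) h
  have hAapp : ∀ i j, A i j = |W i j| * β j := by
    intro i j; rw [hA, Matrix.mul_diagonal]; rfl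
  have hAnn : ∀ i j, 0 ≤ A i j := fun i j => by
    rw [hAapp]; exact mul_nonneg (abs_nonneg _) (hβ j)
  have step : ∀ x y : Fin n → ℝ, ∀ j, |T x j - T y j| ≤ ∑ i, |x i - y i| * A i j := by
    intro x y j
    rw [hT, hT]
    have h0 : (∑ i, x i * W i j + ε j) - (∑ i, y i * W i j + ε j) = ∑ i, (x i - y i) * W i j := by
      rw [add_sub_add_right_eq_sub, ← Finset.sum_sub_distrib]
      exact Finset.sum_congr rfl fun i _ => (sub_mul _ _ _).symm
    calc |f j (∑ i, x i * W i j + ε j) - f j (∑ i, y i * W i j + ε j)|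
        ≤ β j * |(∑ i, x i * W i j + ε j) - (∑ i, y i * W i j + ε j)| := hlip j _ _
      _ = β j * |∑ i, (x i - y i) * W i j| := by rw [h0]
      _ ≤ β j * ∑ i, |x i - y i| * |W i j| := by
          refine mul_le_mul_of_nonneg_left ?_ (hβ j)
          calc |∑ i, (x i - y i) * W i j| ≤ ∑ i, |(x i - y i) * W i j| :=
                Finset.abs_sum_le_sum_abs _ _
            _ = ∑ i, |x i - y i| * |W i j| := by
                exact Finset.sum_congr rfl fun i _ => abs_mul _ _
      _ = ∑ i, |x i - y i| * A i j := by
          rw [Finset.mul_sum]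
          exact Finset.sum_congr rfl fun i _ => by rw [hAapp]; ring
  have hvm : ∀ (w : Fin n → ℝ) (B : Matrix (Fin n) (Fin n) ℝ) (j : Fin n),
      Matrix.vecMul w B j = ∑ i, w i * B i j := by
    intro w B j; simp [Matrix.vecMul, dotProduct]
  have hAknn : ∀ k (i j : Fin n), 0 ≤ (A ^ k) i j := by
    intro k
    induction k with
    | zero =>
      intro i j
      by_cases h : i = j <;> simp [pow_zero, Matrix.one_apply, h]
    | succ k ih =>
      intro i j
      rw [pow_succ, Matrix.mul_apply]
      exact Finset.sum_nonneg fun l _ => mul_nonneg (ih i l) (hAnn l j)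
  have iter : ∀ (k : ℕ) (x y : Fin n → ℝ) (j : Fin n),
      |T^[k] x j - T^[k] y j| ≤ Matrix.vecMul (fun i => |x i - y i|) (A ^ k) j := by
    intro k
    induction k with
    | zero =>
      intro x y j
      simp [pow_zero, Matrix.vecMul_one]
    | succ k ih =>
      intro x y j
      rw [Function.iterate_succ_apply', Function.iterate_succ_apply']
      calc |T (T^[k] x) j - T (T^[k] y) j| ≤ ∑ i, |T^[k] x i - T^[k] y i| * A i j := step _ _ j
        _ ≤ ∑ i, Matrix.vecMul (fun i => |x i - y i|) (A ^ k) i * A i j := by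
            exact Finset.sum_le_sum fun i _ =>
              mul_le_mul_of_nonneg_right (ih x y i) (hAnn i j)
        _ = Matrix.vecMul (fun i => |x i - y i|) (A ^ (k+1)) j := by
            rw [pow_succ, ← Matrix.vecMul_vecMul, hvm]
  have absnorm : ∀ u : Fin n → ℝ, ‖(fun i => |u i|)‖ = ‖u‖ := by
    intro u
    simp [Pi.norm_def, Real.nnnorm_abs]
  have normiter : ∀ (k : ℕ) (x y : Fin n → ℝ),
      ‖T^[k] x - T^[k] y‖ ≤ opNormInf (A ^ k) * ‖x - y‖ := by
    intro k x y
    have h1 : ‖T^[k] x - T^[k] y‖ ≤ ‖Matrix.vecMul (fun i => |x i - y i|) (A ^ k)‖ := by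
      rw [pi_norm_le_iff_of_nonneg (norm_nonneg _)]
      intro j
      have h2 := iter k x y j
      have h3 : Matrix.vecMul (fun i => |x i - y i|) (A ^ k) j ≤
          ‖Matrix.vecMul (fun i => |x i - y i|) (A ^ k)‖ :=
        le_trans (le_abs_self _)
          (by simpa [Real.norm_eq_abs] using
            norm_le_pi_norm (Matrix.vecMul (fun i => |x i - y i|) (A ^ k)) j)
      calc ‖(T^[k] x - T^[k] y) j‖ = |T^[k] x j - T^[k] y j| := by
            simp [Real.norm_eq_abs]
        _ ≤ _ := le_trans h2 h3
    have h4 := norm_vecMul_le (A ^ k) (fun i => |x i - y i|)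
    have h5 : ‖(fun i => |x i - y i|)‖ = ‖x - y‖ := by
      simpa using absnorm (x - y)
    rw [h5] at h4
    linarith
  set c : ℕ → ℝ := fun k => opNormInf (A ^ k) with hc
  have hcnn : ∀ k, 0 ≤ c k := fun k => opNormInf_nonneg _
  obtain ⟨ρ, hρ0, hρ1, hev⟩ := exists_geom A hr
  obtain ⟨N, hN⟩ := eventually_atTop.mp hev
  have hsum : Summable c := by
    rw [← summable_nat_add_iff N]
    refine Summable.of_nonneg_of_le (fun k => hcnn _) (fun k => hN _ (by omega)) ?_
    exact ((summable_geometric_of_lt_one hρ0 hρ1).mul_left ((n:ℝ) * ρ ^ N)).congr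
      (fun k => by rw [pow_add]; ring)
  have hczero : Tendsto c atTop (𝓝 0) := hsum.tendsto_atTop_zero
  have hTcont : Continuous T := by
    have hlip1 : ∀ x y, dist (T x) (T y) ≤ ((c 1).toNNReal : ℝ) * dist x y := by
      intro x y
      rw [Real.coe_toNNReal _ (hcnn 1), dist_eq_norm, dist_eq_norm]
      exact normiter 1 x y
    exact (LipschitzWith.of_dist_le_mul hlip1).continuous
  have key : ∀ x : Fin n → ℝ, ∃ l, Tendsto (fun k => T^[k] x) atTop (𝓝 l) ∧ T l = l := by
    intro x
    have hcauchy : CauchySeq (fun k => T^[k] x) := by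
      apply cauchySeq_of_dist_le_of_summable (fun k => c k * ‖T x - x‖)
      · intro k
        rw [dist_eq_norm]
        have h := normiter k x (T x)
        rw [← Function.iterate_succ_apply, norm_sub_rev x (T x)] at h
        exact h
      · exact hsum.mul_right _
    obtain ⟨l, hl⟩ := cauchySeq_tendsto_of_complete hcauchy
    refine ⟨l, hl, ?_⟩
    have h1 : Tendsto (fun k => T^[k+1] x) atTop (𝓝 l) := hl.comp (tendsto_add_atTop_nat 1)
    have h2 : Tendsto (fun k => T (T^[k] x)) atTop (𝓝 (T l)) := (hTcont.tendsto l).comp hl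
    have h3 : (fun k => T^[k+1] x) = fun k => T (T^[k] x) := by
      funext k; rw [Function.iterate_succ_apply']
    rw [h3] at h1
    exact tendsto_nhds_unique h2 h1
  have uniq : ∀ x y : Fin n → ℝ, T x = x → T y = y → x = y := by
    intro x y hx hy
    have hb : ∀ k, ‖x - y‖ ≤ c k * ‖x - y‖ := by
      intro k
      have h := normiter k x y
      rwa [Function.iterate_fixed hx, Function.iterate_fixed hy] at h
    have h0 : Tendsto (fun k => c k * ‖x - y‖) atTop (𝓝 (0 * ‖x - y‖)) :=
      hczero.mul_const _
    rw [zero_mul] at h0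
    have h1 : ‖x - y‖ ≤ 0 := ge_of_tendsto' h0 hb
    have h2 : x - y = 0 := by
      have := le_antisymm h1 (norm_nonneg _)
      exact norm_eq_zero.mp this
    exact sub_eq_zero.mp h2
  constructor
  · obtain ⟨xstar, hx1, hx2⟩ := key 0
    refine ⟨xstar, hx2, fun y hy => uniq y xstar hy hx2, fun x => ?_⟩
    obtain ⟨l, h1, h2⟩ := key x
    rwa [uniq l xstar h2 hx2] at h1
  · intro k x
    have h := normiter k (T x) x
    rw [← Function.iterate_succ_apply] at h
    exact h
end

section
/- Let f_1, …, f_n : ℝ → ℝ be increasing, non-expansive and bounded, and let W ∈ ℝ^{n×n} be nonnegative, irreducible, and of spectral radius r(W) = 1. Then the set M := {ε ∈ ℝ^n : there exist x ≠ y in ℝ^n with x_j = f_j(Σ_i x_i w_{ij} + ε_j) and y_j = f_j(Σ_i y_i w_{ij} + ε_j) for all j} of shock vectors that admit multiple equilibria has Lebesgue measure zero in ℝ^n. -/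
open Filter Topology MeasureTheory Set
open scoped ENNReal NNReal

attribute [local instance] Matrix.linftyOpNormedRing Matrix.linftyOpNormedAlgebra

section LemA

variable {n : ℕ}

lemma pow_entry_nonneg (W : Matrix (Fin n) (Fin n) ℝ) (hpos : ∀ i j, 0 ≤ W i j) :
    ∀ (k : ℕ) i j, 0 ≤ (W ^ k) i j := by
  intro k
  induction k with
  | zero => intro i j; rw [pow_zero, Matrix.one_apply]; positivity
  | succ k ih =>
      intro i j
      rw [pow_succ, Matrix.mul_apply]
      exact Finset.sum_nonneg fun l _ => mul_nonneg (ih i l) (hpos l j)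

lemma entry_le_norm (X : Matrix (Fin n) (Fin n) ℂ) (i j : Fin n) : ‖X i j‖ ≤ ‖X‖ := by
  rw [Matrix.linfty_opNorm_def]
  have h1 : ‖X i j‖₊ ≤ ∑ j', ‖X i j'‖₊ :=
    Finset.single_le_sum (f := fun j' => ‖X i j'‖₊) (fun _ _ => zero_le) (Finset.mem_univ j)
  have h2 : (∑ j', ‖X i j'‖₊) ≤ (Finset.univ : Finset (Fin n)).sup fun i => ∑ j', ‖X i j'‖₊ :=
    Finset.le_sup (f := fun i => ∑ j', ‖X i j'‖₊) (Finset.mem_univ i)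
  exact_mod_cast h1.trans h2

lemma lemA (W : Matrix (Fin n) (Fin n) ℝ)
    (hpos : ∀ i j, 0 ≤ W i j)
    (hirr : ∀ i j, ∃ k : ℕ, 0 < (W ^ k) i j)
    (hr : specRad W = 1) (d : Fin n → ℝ)
    (hd0 : ∀ j, 0 ≤ d j) (j₀ : Fin n) (hj₀ : 0 < d j₀) {t : ℝ} (ht : 0 < t)
    (hle : ∀ j, d j ≤ ∑ i, d i * W i j)
    (hstr : ∀ j, 0 < d j → d j + t ≤ ∑ i, d i * W i j) : False := by
  classical
  set dm : ℕ → Fin n → ℝ := fun k j => ∑ i, d i * (W ^ k) i j with hdm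
  have dm0 : ∀ j, dm 0 j = d j := by
    intro j; simp [hdm, Matrix.one_apply]
  have dmAdd : ∀ a b j, dm (a + b) j = ∑ i, dm a i * (W ^ b) i j := by
    intro a b j
    simp only [hdm, pow_add, Matrix.mul_apply, Finset.mul_sum, Finset.sum_mul]
    rw [Finset.sum_comm]
    exact Finset.sum_congr rfl fun l _ => Finset.sum_congr rfl fun i _ => by ring
  have dm_succ : ∀ k j, dm (k + 1) j = ∑ i, dm k i * W i j := by
    intro k j
    have := dmAdd k 1 j
    simpa [pow_one] using this
  have dm_mono : ∀ k j, dm k j ≤ dm (k + 1) j := by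
    intro k
    induction k with
    | zero => intro j; rw [dm0, dm_succ]; simpa [dm0] using hle j
    | succ k ih =>
        intro j
        rw [dm_succ, dm_succ]
        exact Finset.sum_le_sum fun i _ => mul_le_mul_of_nonneg_right (ih i) (hpos i j)
  have dm_le : ∀ {k l : ℕ}, k ≤ l → ∀ j, dm k j ≤ dm l j := by
    intro k l hkl j
    exact (monotone_nat_of_le_succ (fun m => dm_mono m j)) hkl
  -- choose powers realizing irreducibility from j₀
  choose kk hkk using hirr j₀
  set K : ℕ := (Finset.univ.sup kk) + 1 with hK
  have hK1 : 1 ≤ K := Nat.succ_le_succ (Nat.zero_le _)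
  have hd1 : ∀ i, d i ≤ dm 1 i := by
    intro i
    rw [show (1:ℕ) = 0 + 1 from rfl, dm_succ]
    simpa [dm0] using hle i
  have hstr1 : d j₀ + t ≤ dm 1 j₀ := by
    rw [show (1:ℕ) = 0 + 1 from rfl, dm_succ]
    simpa [dm0] using hstr j₀ hj₀
  have hgain : ∀ j, d j < dm K j := by
    intro j
    have h1 : dm (kk j) j + t * (W ^ (kk j)) j₀ j ≤ dm (1 + kk j) j := by
      rw [dmAdd 1 (kk j) j]
      have : ∀ i, d i * (W ^ (kk j)) i j + (if i = j₀ then t * (W ^ (kk j)) j₀ j else 0)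
          ≤ dm 1 i * (W ^ (kk j)) i j := by
        intro i
        by_cases hi : i = j₀
        · rw [hi]
          simp only [eq_self_iff_true, if_true]
          have : (d j₀ + t) * (W ^ (kk j)) j₀ j ≤ dm 1 j₀ * (W ^ (kk j)) j₀ j :=
            mul_le_mul_of_nonneg_right hstr1 (pow_entry_nonneg W hpos _ _ _)
          linarith [this]
        · simp only [if_neg hi, add_zero]
          exact mul_le_mul_of_nonneg_right (hd1 i) (pow_entry_nonneg W hpos _ _ _)
      calc dm (kk j) j + t * (W ^ (kk j)) j₀ j
          = ∑ i, (d i * (W ^ (kk j)) i j + (if i = j₀ then t * (W ^ (kk j)) j₀ j else 0)) := by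
            rw [Finset.sum_add_distrib, Finset.sum_ite_eq' Finset.univ j₀]
            simp [hdm]
        _ ≤ ∑ i, dm 1 i * (W ^ (kk j)) i j := Finset.sum_le_sum fun i _ => this i
    have h2 : 0 < t * (W ^ (kk j)) j₀ j := mul_pos ht (hkk j)
    have h3 : dm (1 + kk j) j ≤ dm K j := by
      refine dm_le ?_ j
      have := Finset.le_sup (f := kk) (Finset.mem_univ j)
      omega
    have h4 : d j ≤ dm (kk j) j := by
      have := dm_le (Nat.zero_le (kk j)) j
      rwa [dm0] at this
    linarith
  -- the uniform gain factor
  have hne : (Finset.univ : Finset (Fin n)).Nonempty := ⟨j₀, Finset.mem_univ j₀⟩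
  set δ : ℝ := Finset.univ.inf' hne fun j => (dm K j - d j) / (d j + 1) with hδ
  have hδpos : 0 < δ := by
    rw [hδ]
    rw [Finset.lt_inf'_iff]
    intro j _
    have h1 : 0 < d j + 1 := by linarith [hd0 j]
    exact div_pos (by linarith [hgain j]) h1
  have hδle : ∀ j, (1 + δ) * d j ≤ dm K j := by
    intro j
    have h1 : 0 < d j + 1 := by linarith [hd0 j]
    have h2 : δ ≤ (dm K j - d j) / (d j + 1) := Finset.inf'_le _ (Finset.mem_univ j)
    have h3 : δ * (d j + 1) ≤ dm K j - d j := by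
      rw [← le_div_iff₀ h1]; exact h2
    nlinarith [hd0 j, hδpos]
  have hpow : ∀ m j, (1 + δ) ^ m * d j ≤ dm (K * m) j := by
    intro m
    induction m with
    | zero => intro j; simpa [dm0] using le_refl (d j)
    | succ m ih =>
        intro j
        have h1 : dm (K * (m + 1)) j = ∑ i, dm (K * m) i * (W ^ K) i j := by
          rw [show K * (m + 1) = K * m + K by ring, dmAdd]
        rw [h1]
        have h2 : ∑ i, ((1 + δ) ^ m * d i) * (W ^ K) i j ≤ ∑ i, dm (K * m) i * (W ^ K) i j :=
          Finset.sum_le_sum fun i _ =>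
            mul_le_mul_of_nonneg_right (ih i) (pow_entry_nonneg W hpos _ _ _)
        have h3 : ∑ i, ((1 + δ) ^ m * d i) * (W ^ K) i j = (1 + δ) ^ m * dm K j := by
          rw [hdm, Finset.mul_sum]
          exact Finset.sum_congr rfl fun i _ => by ring
        have h4 : (1 + δ) ^ (m + 1) * d j ≤ (1 + δ) ^ m * dm K j := by
          have := hδle j
          have hp : (0:ℝ) ≤ (1 + δ) ^ m := by positivity
          calc (1 + δ) ^ (m + 1) * d j = (1 + δ) ^ m * ((1 + δ) * d j) := by ring
            _ ≤ (1 + δ) ^ m * dm K j := by nlinarith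
        linarith [h3 ▸ h2]
  -- pass to the complex matrix, bound norms of powers from below
  set A : Matrix (Fin n) (Fin n) ℂ := W.map (Complex.ofReal : ℝ → ℂ) with hA
  have hmap : ∀ N : ℕ, A ^ N = (W ^ N).map (Complex.ofReal : ℝ → ℂ) := by
    intro N
    induction N with
    | zero =>
        simp only [pow_zero]
        ext i j
        simp [Matrix.map_apply, Matrix.one_apply, apply_ite (Complex.ofReal : ℝ → ℂ)]
    | succ N ih =>
        rw [pow_succ, pow_succ, ih, hA]
        ext i j
        simp [Matrix.mul_apply, Matrix.map_apply]
  have hentry : ∀ (N : ℕ) (i j : Fin n), (W ^ N) i j ≤ ‖A ^ N‖ := by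
    intro N i j
    calc (W ^ N) i j ≤ |(W ^ N) i j| := le_abs_self _
      _ = ‖(((W ^ N) i j : ℝ) : ℂ)‖ := by rw [Complex.norm_real, Real.norm_eq_abs]
      _ = ‖(A ^ N) i j‖ := by rw [hmap N]; rfl
      _ ≤ ‖A ^ N‖ := entry_le_norm _ i j
  set S : ℝ := ∑ i, d i with hS
  have hSpos : 0 < S := by
    have : d j₀ ≤ S := Finset.single_le_sum (f := d) (fun i _ => hd0 i) (Finset.mem_univ j₀)
    linarith
  set c : ℝ := d j₀ / S with hc
  have hcpos : 0 < c := div_pos hj₀ hSpos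
  have hnorm : ∀ m : ℕ, c * (1 + δ) ^ m ≤ ‖A ^ (K * m)‖ := by
    intro m
    have h1 : (1 + δ) ^ m * d j₀ ≤ dm (K * m) j₀ := hpow m j₀
    have h2 : dm (K * m) j₀ ≤ S * ‖A ^ (K * m)‖ := by
      rw [hdm, hS, Finset.sum_mul]
      exact Finset.sum_le_sum fun i _ =>
        mul_le_mul_of_nonneg_left (hentry _ i j₀) (hd0 i)
    rw [hc, div_mul_eq_mul_div, div_le_iff₀ hSpos]
    nlinarith
  set β : ℝ := Real.sqrt (1 + δ) with hβ
  have hβ1 : 1 < β := by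
    nlinarith [Real.sq_sqrt (show (0:ℝ) ≤ 1 + δ by linarith), Real.sqrt_nonneg (1 + δ),
      hβ ▸ (rfl : β = β)]
  have hβsq : β ^ 2 = 1 + δ := Real.sq_sqrt (by linarith)
  have hev : ∀ᶠ m : ℕ in atTop, β ^ m ≤ ‖A ^ (K * m)‖ := by
    have hinf : Tendsto (fun m : ℕ => β ^ m) atTop atTop :=
      tendsto_pow_atTop_atTop_of_one_lt hβ1
    filter_upwards [hinf.eventually_ge_atTop (1 / c)] with m hm
    have h1 : c * (1 + δ) ^ m ≤ ‖A ^ (K * m)‖ := hnorm m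
    have h2 : (1 + δ) ^ m = β ^ m * β ^ m := by
      rw [← hβsq]; ring
    have hb0 : (0:ℝ) < β ^ m := by positivity
    have h3 : 1 ≤ c * β ^ m := by
      rw [div_le_iff₀ hcpos] at hm
      nlinarith
    nlinarith
  -- Gelfand's formula
  haveI : CompleteSpace (Matrix (Fin n) (Fin n) ℂ) := FiniteDimensional.complete ℂ _
  have hGel := spectrum.pow_nnnorm_pow_one_div_tendsto_nhds_spectralRadius A
  have hKm : Tendsto (fun m : ℕ => K * m) atTop atTop := by
    refine Filter.tendsto_atTop_mono (fun m => ?_) Filter.tendsto_id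
    calc (id m : ℕ) = 1 * m := (one_mul m).symm
      _ ≤ K * m := Nat.mul_le_mul_right m hK1
  have hsub : Tendsto (fun m : ℕ => (‖A ^ (K * m)‖₊ : ℝ≥0∞) ^ (1 / (K * m : ℕ) : ℝ)) atTop
      (𝓝 (spectralRadius ℂ A)) := hGel.comp hKm
  set ρ : ℝ≥0∞ := ENNReal.ofReal (β ^ ((K:ℝ))⁻¹) with hρ
  have hρ1 : 1 < β ^ ((K:ℝ))⁻¹ := by
    rw [Real.one_lt_rpow_iff_of_pos (by linarith)]
    exact Or.inl ⟨hβ1, by positivity⟩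
  have hev2 : ∀ᶠ m : ℕ in atTop, ρ ≤ (‖A ^ (K * m)‖₊ : ℝ≥0∞) ^ (1 / (K * m : ℕ) : ℝ) := by
    filter_upwards [hev, Filter.eventually_ge_atTop 1] with m hm hm1
    have hN : 0 < K * m := Nat.mul_pos (by omega) (by omega)
    have hNR : (0:ℝ) < ((K * m : ℕ) : ℝ) := by exact_mod_cast hN
    have step1 : ρ ^ (((K * m : ℕ)) : ℝ) ≤ (‖A ^ (K * m)‖₊ : ℝ≥0∞) := by
      have hβ0 : (0:ℝ) ≤ β := by linarith
      have hexp : ((K:ℝ))⁻¹ * ((K * m : ℕ) : ℝ) = (m : ℝ) := by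
        have hKR : ((K:ℝ)) ≠ 0 := by positivity
        push_cast
        field_simp
      rw [hρ, ENNReal.ofReal_rpow_of_pos (by positivity), ← Real.rpow_mul hβ0, hexp,
        Real.rpow_natCast]
      calc ENNReal.ofReal (β ^ m) ≤ ENNReal.ofReal ‖A ^ (K * m)‖ := ENNReal.ofReal_le_ofReal hm
        _ = (‖A ^ (K * m)‖₊ : ℝ≥0∞) := ofReal_norm _
    calc ρ = (ρ ^ (((K * m : ℕ)) : ℝ)) ^ (1 / ((K * m : ℕ)) : ℝ) := by
          rw [← ENNReal.rpow_mul, mul_one_div, div_self (ne_of_gt hNR), ENNReal.rpow_one]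
      _ ≤ (‖A ^ (K * m)‖₊ : ℝ≥0∞) ^ (1 / ((K * m : ℕ)) : ℝ) :=
          ENNReal.rpow_le_rpow step1 (by positivity)
  have hrad : ρ ≤ spectralRadius ℂ A := ge_of_tendsto hsub hev2
  have hρgt : (1:ℝ≥0∞) < ρ := by
    rw [hρ]
    exact ENNReal.one_lt_ofReal.mpr hρ1
  have hlt : (1:ℝ≥0∞) < spectralRadius ℂ A := lt_of_lt_of_le hρgt hrad
  rw [spectralRadius] at hlt
  obtain ⟨μ, hμ⟩ := lt_iSup_iff.mp hlt
  obtain ⟨hμσ, hμ1⟩ := lt_iSup_iff.mp hμ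
  have hμR : (1:ℝ) < ‖μ‖ := by
    have : (1:ℝ≥0) < ‖μ‖₊ := by exact_mod_cast hμ1
    exact_mod_cast this
  have hbdd : BddAbove {r : ℝ | ∃ μ' : ℂ,
      μ' ∈ spectrum ℂ (W.map (Complex.ofReal : ℝ → ℂ)) ∧ r = ‖μ'‖} := by
    refine ⟨‖A‖ * ‖(1 : Matrix (Fin n) (Fin n) ℂ)‖, ?_⟩
    rintro r ⟨μ', hμ', rfl⟩
    exact spectrum.norm_le_norm_mul_of_mem hμ'
  have hmem : ‖μ‖ ∈ {r : ℝ | ∃ μ' : ℂ,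
      μ' ∈ spectrum ℂ (W.map (Complex.ofReal : ℝ → ℂ)) ∧ r = ‖μ'‖} := ⟨μ, hμσ, rfl⟩
  have hle2 : ‖μ‖ ≤ specRad W := le_csSup hbdd hmem
  rw [hr] at hle2
  linarith

end LemA

section Main

variable {n : ℕ}

lemma claim2 (f : Fin n → ℝ → ℝ) (W : Matrix (Fin n) (Fin n) ℝ)
    (hmono : ∀ j, Monotone (f j))
    (hne : ∀ j, ∀ s t : ℝ, |f j s - f j t| ≤ |s - t|)
    (hpos : ∀ i j, 0 ≤ W i j)
    (hirr : ∀ i j, ∃ k : ℕ, 0 < (W ^ k) i j)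
    (hr : specRad W = 1)
    {t : ℝ} (ht : 0 < t) {ε ε' z x : Fin n → ℝ}
    (hεε : ∀ j, ε' j + t ≤ ε j)
    (hz : ∀ j, z j = f j (∑ i, z i * W i j + ε' j))
    (hx : ∀ j, x j = f j (∑ i, x i * W i j + ε j)) :
    ∀ j, z j ≤ x j := by
  by_contra hcon
  push_neg at hcon
  obtain ⟨j₀, hj₀⟩ := hcon
  set d : Fin n → ℝ := fun j => max (z j - x j) 0 with hd
  have hd0 : ∀ j, 0 ≤ d j := fun j => le_max_right _ _
  have hdj₀ : 0 < d j₀ := lt_max_of_lt_left (by linarith)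
  have key : ∀ j, 0 < d j → d j + t ≤ ∑ i, d i * W i j := by
    intro j hj
    have hzx : x j < z j := by
      by_contra hzx
      push_neg at hzx
      have : d j = 0 := max_eq_right (by linarith)
      rw [this] at hj; exact lt_irrefl 0 hj
    have hdj : d j = z j - x j := max_eq_left (by linarith)
    set a : ℝ := ∑ i, z i * W i j + ε' j with ha
    set b : ℝ := ∑ i, x i * W i j + ε j with hb
    have hab : b < a := by
      by_contra hab
      push_neg at hab
      have := hmono j hab
      rw [← hz j, ← hx j] at this
      linarith
    have h2 : z j - x j ≤ a - b := by
      have h3 : z j - x j = f j a - f j b := by rw [hz j, hx j]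
      have h4 : |f j a - f j b| ≤ |a - b| := hne j a b
      rw [abs_of_pos (by linarith : (0:ℝ) < a - b)] at h4
      calc z j - x j = f j a - f j b := h3
        _ ≤ |f j a - f j b| := le_abs_self _
        _ ≤ a - b := h4
    have h5 : a - b ≤ ∑ i, d i * W i j - t := by
      have h6 : ∑ i, (z i - x i) * W i j = (∑ i, z i * W i j) - (∑ i, x i * W i j) := by
        rw [← Finset.sum_sub_distrib]
        exact Finset.sum_congr rfl fun i _ => by ring
      have h6' : a - b = (∑ i, (z i - x i) * W i j) + (ε' j - ε j) := by
        rw [ha, hb, h6]; ring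
      have h7 : ∑ i, (z i - x i) * W i j ≤ ∑ i, d i * W i j :=
        Finset.sum_le_sum fun i _ =>
          mul_le_mul_of_nonneg_right (le_max_left _ _) (hpos i j)
      have h8 : ε' j - ε j ≤ -t := by linarith [hεε j]
      linarith
    linarith
  have key2 : ∀ j, d j ≤ ∑ i, d i * W i j := by
    intro j
    rcases lt_or_ge 0 (d j) with hj | hj
    · linarith [key j hj]
    · have : d j = 0 := le_antisymm hj (hd0 j)
      rw [this]
      exact Finset.sum_nonneg fun i _ => mul_nonneg (hd0 i) (hpos i j)
  exact lemA W hpos hirr hr d hd0 j₀ hdj₀ ht key2 key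

end Main

/-- If each `f j` is increasing, non-expansive and bounded, and `W` is nonnegative,
irreducible with spectral radius `1`, then the set of shock vectors `ε` admitting
two distinct equilibria has Lebesgue measure zero in `ℝ^n`. -/
theorem stmt10 {n : ℕ} (f : Fin n → ℝ → ℝ) (W : Matrix (Fin n) (Fin n) ℝ)
    (hmono : ∀ j, Monotone (f j))
    (hne : ∀ j, ∀ s t : ℝ, |f j s - f j t| ≤ |s - t|)
    (hbdd : ∀ j, ∃ M > 0, ∀ t : ℝ, |f j t| ≤ M)
    (hpos : ∀ i j, 0 ≤ W i j)
    (hirr : ∀ i j, ∃ k : ℕ, 0 < (W ^ k) i j)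
    (hr : specRad W = 1) :
    MeasureTheory.volume {ε : Fin n → ℝ | ∃ x y : Fin n → ℝ, x ≠ y ∧
      (∀ j, x j = f j (∑ i, x i * W i j + ε j)) ∧
      (∀ j, y j = f j (∑ i, y i * W i j + ε j))} = 0 := by
  classical
  -- the upper sets indexed by rationals
  set U : ℚ → Set (Fin n → ℝ) := fun q =>
    {ε | ∃ ε' x : Fin n → ℝ, (∃ s : ℝ, 0 < s ∧ ∀ j, ε' j + s ≤ ε j) ∧
      (∀ j, x j = f j (∑ i, x i * W i j + ε' j)) ∧ (q : ℝ) < ∑ j, x j} with hU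
  have hupper : ∀ q, IsUpperSet (U q) := by
    intro q a b hab ⟨ε', x, ⟨s, hs, hle⟩, hx, hq⟩
    exact ⟨ε', x, ⟨s, hs, fun j => (hle j).trans (hab j)⟩, hx, hq⟩
  have hsub : {ε : Fin n → ℝ | ∃ x y : Fin n → ℝ, x ≠ y ∧
      (∀ j, x j = f j (∑ i, x i * W i j + ε j)) ∧
      (∀ j, y j = f j (∑ i, y i * W i j + ε j))} ⊆ ⋃ q : ℚ, frontier (U q) := by
    rintro ε ⟨x, y, hxy, hx, hy⟩
    obtain ⟨j', hj'⟩ := Function.ne_iff.mp hxy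
    set a : ℝ := ∑ j, min (x j) (y j) with hadef
    set b : ℝ := max (∑ j, x j) (∑ j, y j) with hbdef
    have hminmax : ∑ j, min (x j) (y j) < ∑ j, max (x j) (y j) :=
      Finset.sum_lt_sum (fun j _ => min_le_max)
        ⟨j', Finset.mem_univ j', min_lt_max.mpr hj'⟩
    have hsum : ∑ j, max (x j) (y j) + ∑ j, min (x j) (y j) = (∑ j, x j) + ∑ j, y j := by
      rw [← Finset.sum_add_distrib, ← Finset.sum_add_distrib]
      exact Finset.sum_congr rfl fun j _ => max_add_min _ _
    have hab : a < b := by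
      have h1 : (∑ j, x j) ≤ b := le_max_left _ _
      have h2 : (∑ j, y j) ≤ b := le_max_right _ _
      rw [hadef]
      linarith
    obtain ⟨q, hq1, hq2⟩ := exists_rat_btwn hab
    refine Set.mem_iUnion.mpr ⟨q, ?_⟩
    rw [frontier_eq_closure_inter_closure]
    have htendsto : ∀ c : ℝ, Tendsto (fun t : ℝ => fun j => ε j + c * t) (𝓝[>] (0:ℝ)) (𝓝 ε) := by
      intro c
      rw [tendsto_pi_nhds]
      intro j
      have h0 : Tendsto (fun t : ℝ => t) (𝓝[>] (0:ℝ)) (𝓝 0) :=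
        tendsto_id.mono_left nhdsWithin_le_nhds
      have := (tendsto_const_nhds (x := ε j)).add ((tendsto_const_nhds (x := c)).mul h0)
      simpa using this
    constructor
    · -- ε is in the closure of U q
      obtain ⟨w, hw, hwb⟩ : ∃ w : Fin n → ℝ,
          (∀ j, w j = f j (∑ i, w i * W i j + ε j)) ∧ (q:ℝ) < ∑ j, w j := by
        rcases le_total (∑ j, y j) (∑ j, x j) with h | h
        · exact ⟨x, hx, by rw [hbdef, max_eq_left h] at hq2; exact hq2⟩
        · exact ⟨y, hy, by rw [hbdef, max_eq_right h] at hq2; exact hq2⟩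
      refine mem_closure_of_tendsto (htendsto 1) ?_
      filter_upwards [self_mem_nhdsWithin] with t ht
      exact ⟨ε, w, ⟨t, ht, fun j => by simp⟩, hw, hwb⟩
    · -- ε is in the closure of the complement of U q
      refine mem_closure_of_tendsto (htendsto (-1)) ?_
      filter_upwards [self_mem_nhdsWithin] with t ht
      have ht' : (0:ℝ) < t := ht
      intro hmem
      obtain ⟨ε', z, ⟨s, hs, hle⟩, hz, hqz⟩ := hmem
      have hshift : ∀ j, ε' j + (s + t) ≤ ε j := by
        intro j
        have := hle j
        simp only at this
        linarith
      have hzx : ∀ j, z j ≤ x j :=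
        claim2 f W hmono hne hpos hirr hr (by linarith : (0:ℝ) < s + t) hshift hz hx
      have hzy : ∀ j, z j ≤ y j :=
        claim2 f W hmono hne hpos hirr hr (by linarith : (0:ℝ) < s + t) hshift hz hy
      have hza : ∑ j, z j ≤ a := by
        rw [hadef]
        exact Finset.sum_le_sum fun j _ => le_min (hzx j) (hzy j)
      linarith
  refine measure_mono_null hsub (measure_iUnion_null fun q => (hupper q).null_frontier)
end

section
/- Let f_1, …, f_n : ℝ → ℝ be increasing, non-expansive and bounded, and let W ∈ ℝ^{n×n} be nonnegative with spectral radius r(W) = 1. Then (i) for every ε ∈ ℝ^n an equilibrium exists, and (ii) the set M := {ε ∈ ℝ^n : there exist two distinct equilibria for the shock ε} has Lebesgue measure zero in ℝ^n; consequently, if the random shock vector ε has an absolutely continuous distribution, the equilibrium is unique with probability one. -/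
open MeasureTheory Filter Topology Finset

namespace Stmt11

attribute [local instance] Matrix.linftyOpNormedRing Matrix.linftyOpNormedAlgebra

variable {n : ℕ}

lemma entry_le_norm (A : Matrix (Fin n) (Fin n) ℝ) (i j : Fin n) : A i j ≤ ‖A‖ := by
  have h1 : ‖A i j‖ ≤ ∑ j' : Fin n, ‖A i j'‖ :=
    Finset.single_le_sum (f := fun j' => ‖A i j'‖) (fun _ _ => norm_nonneg _) (mem_univ j)
  have h2 : (∑ j' : Fin n, ‖A i j'‖) ≤ ‖A‖ := by
    rw [Matrix.linfty_opNorm_def]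
    have : (∑ j' : Fin n, ‖A i j'‖₊) ≤ (Finset.univ : Finset (Fin n)).sup
        (fun i : Fin n => ∑ j' : Fin n, ‖A i j'‖₊) :=
      Finset.le_sup (f := fun i : Fin n => ∑ j' : Fin n, ‖A i j'‖₊) (mem_univ i)
    calc (∑ j' : Fin n, ‖A i j'‖) = ((∑ j' : Fin n, ‖A i j'‖₊ : NNReal) : ℝ) := by
          push_cast; rfl
      _ ≤ _ := by exact_mod_cast this
  exact le_trans (le_abs_self _) (h1.trans h2)

lemma norm_map_ofReal (A : Matrix (Fin n) (Fin n) ℝ) :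
    ‖A.map (Complex.ofReal : ℝ → ℂ)‖ = ‖A‖ := by
  rw [Matrix.linfty_opNorm_def, Matrix.linfty_opNorm_def]
  congr 1
  apply Finset.sup_congr rfl
  intro i _
  apply Finset.sum_congr rfl
  intro j _
  simp [Matrix.map_apply]

/-- The key spectral lemma: a nonnegative vector `v` with `lam * v ≤ v W` (componentwise)
for `lam > 1` must vanish when the spectral radius of the nonnegative matrix `W` is `1`. -/
lemma spec_contra (W : Matrix (Fin n) (Fin n) ℝ) (hpos : ∀ i j, 0 ≤ W i j)
    (hr : specRad W = 1) (v : Fin n → ℝ) (hv0 : ∀ i, 0 ≤ v i)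
    (lam : ℝ) (hlam : 1 < lam)
    (hineq : ∀ j, lam * v j ≤ ∑ i, v i * W i j) : v = 0 := by
  by_contra hv
  obtain ⟨j₀, hj₀⟩ : ∃ j₀, v j₀ ≠ 0 := by
    by_contra h; push_neg at h; exact hv (funext h)
  have hj₀' : 0 < v j₀ := lt_of_le_of_ne (hv0 j₀) (Ne.symm hj₀)
  have hne : Nonempty (Fin n) := ⟨j₀⟩
  obtain ⟨j₁, -, hj₁⟩ := Finset.exists_max_image Finset.univ v ⟨j₀, mem_univ j₀⟩
  have hm : 0 < v j₁ := lt_of_lt_of_le hj₀' (hj₁ j₀ (mem_univ j₀))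
  -- powers of W are nonnegative
  have hWk : ∀ k : ℕ, ∀ i j, 0 ≤ (W ^ k) i j := by
    intro k
    induction k with
    | zero => intro i j; rw [pow_zero, Matrix.one_apply]; positivity
    | succ k ih =>
      intro i j
      rw [pow_succ, Matrix.mul_apply]
      exact Finset.sum_nonneg fun l _ => mul_nonneg (ih i l) (hpos l j)
  -- iterated inequality
  have hiter : ∀ k : ℕ, ∀ j, lam ^ k * v j ≤ ∑ i, v i * (W ^ k) i j := by
    intro k
    induction k with
    | zero => intro j; simp [Matrix.one_apply]
    | succ k ih =>
      intro j
      have h1 : ∀ i, lam ^ k * v i * W i j ≤ (∑ l, v l * (W ^ k) l i) * W i j :=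
        fun i => mul_le_mul_of_nonneg_right (ih i) (hpos i j)
      calc lam ^ (k + 1) * v j = lam ^ k * (lam * v j) := by ring
        _ ≤ lam ^ k * (∑ i, v i * W i j) := by
            apply mul_le_mul_of_nonneg_left (hineq j)
            positivity
        _ = ∑ i, lam ^ k * v i * W i j := by rw [Finset.mul_sum]; ring_nf
        _ ≤ ∑ i, (∑ l, v l * (W ^ k) l i) * W i j := Finset.sum_le_sum fun i _ => h1 i
        _ = ∑ i, v i * (W ^ (k + 1)) i j := by
            rw [pow_succ]
            simp_rw [Matrix.mul_apply, Finset.sum_mul, Finset.mul_sum]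
            rw [Finset.sum_comm]
            apply Finset.sum_congr rfl; intro l _
            apply Finset.sum_congr rfl; intro i _
            ring
  -- growth of the norm
  have hgrow : ∀ k : ℕ, lam ^ k ≤ (n : ℝ) * ‖W ^ k‖ := by
    intro k
    have h1 : lam ^ k * v j₁ ≤ (∑ i, (W ^ k) i j₁) * v j₁ := by
      calc lam ^ k * v j₁ ≤ ∑ i, v i * (W ^ k) i j₁ := hiter k j₁
        _ ≤ ∑ i, v j₁ * (W ^ k) i j₁ :=
            Finset.sum_le_sum fun i _ =>
              mul_le_mul_of_nonneg_right (hj₁ i (mem_univ i)) (hWk k i j₁)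
        _ = (∑ i, (W ^ k) i j₁) * v j₁ := by
            rw [Finset.sum_mul]; apply Finset.sum_congr rfl; intros; ring
    have h2 : lam ^ k ≤ ∑ i, (W ^ k) i j₁ := le_of_mul_le_mul_right h1 hm
    calc lam ^ k ≤ ∑ i, (W ^ k) i j₁ := h2
      _ ≤ ∑ _i : Fin n, ‖W ^ k‖ := Finset.sum_le_sum fun i _ => entry_le_norm _ i j₁
      _ = (n : ℝ) * ‖W ^ k‖ := by simp [Finset.sum_const, nsmul_eq_mul]
  -- pass to the complex matrix
  set Wc := W.map (Complex.ofReal : ℝ → ℂ) with hWcdef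
  have hWck : ∀ k : ℕ, Wc ^ k = (W ^ k).map (Complex.ofReal : ℝ → ℂ) := by
    intro k
    have h1 : Wc = (Complex.ofRealHom : ℝ →+* ℂ).mapMatrix W := rfl
    rw [h1, ← map_pow]
    rfl
  -- every eigenvalue has modulus at most 1
  have hspecbdd : ∀ μ : ℂ, μ ∈ spectrum ℂ Wc → ‖μ‖ ≤ 1 := by
    intro μ hμ
    have hb : BddAbove {r : ℝ | ∃ μ : ℂ, μ ∈ spectrum ℂ Wc ∧ r = ‖μ‖} := by
      refine ⟨‖Wc‖, ?_⟩
      rintro r ⟨μ', hμ', rfl⟩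
      exact spectrum.norm_le_norm_of_mem hμ'
    have := le_csSup hb ⟨μ, hμ, rfl⟩
    rw [← specRad] at this
    calc ‖μ‖ ≤ specRad W := this
      _ = 1 := hr
  have hsr : spectralRadius ℂ Wc ≤ 1 := by
    rw [spectralRadius]
    refine iSup₂_le fun μ hμ => ?_
    have h := hspecbdd μ hμ
    have h' : ‖μ‖₊ ≤ 1 := h
    exact_mod_cast h'
  have hcs : CompleteSpace (Matrix (Fin n) (Fin n) ℂ) := FiniteDimensional.complete ℂ _
  have hg := spectrum.pow_nnnorm_pow_one_div_tendsto_nhds_spectralRadius Wc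
  set q : ℝ := (1 + lam) / 2 with hqdef
  have hq1 : 1 < q := by rw [hqdef]; linarith
  have hq0 : 0 < q := by linarith
  have hlt : spectralRadius ℂ Wc < ENNReal.ofReal q := by
    refine lt_of_le_of_lt hsr ?_
    rw [← ENNReal.ofReal_one]
    exact (ENNReal.ofReal_lt_ofReal_iff hq0).mpr hq1
  have hev : ∀ᶠ k : ℕ in atTop, (‖Wc ^ k‖₊ : ENNReal) ^ (1 / (k : ℝ)) < ENNReal.ofReal q :=
    hg.eventually_lt_const hlt
  have hev2 : ∀ᶠ k : ℕ in atTop, (n : ℝ) < (lam / q) ^ k :=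
    (tendsto_pow_atTop_atTop_of_one_lt
      (by rw [lt_div_iff₀ hq0]; rw [hqdef]; linarith)).eventually_gt_atTop _
  obtain ⟨k, ⟨hk1, hk2⟩, hk3⟩ := ((hev.and hev2).and (eventually_gt_atTop 0)).exists
  have hk0 : (k : ℝ) ≠ 0 := by positivity
  have h5 : (‖Wc ^ k‖₊ : ENNReal) < (ENNReal.ofReal q) ^ (k : ℝ) := by
    have h := ENNReal.rpow_lt_rpow hk1 (by positivity : (0 : ℝ) < (k : ℝ))
    rwa [← ENNReal.rpow_mul, one_div, inv_mul_cancel₀ hk0, ENNReal.rpow_one] at h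
  have h6 : (ENNReal.ofReal q) ^ (k : ℝ) = ENNReal.ofReal (q ^ k) := by
    rw [ENNReal.rpow_natCast, ← ENNReal.ofReal_pow hq0.le]
  have h7 : ‖Wc ^ k‖ < q ^ k := by
    rw [h6, ENNReal.ofReal] at h5
    have h5' : ‖Wc ^ k‖₊ < (q ^ k).toNNReal := ENNReal.coe_lt_coe.mp h5
    have := NNReal.coe_lt_coe.mpr h5'
    rwa [Real.coe_toNNReal _ (by positivity)] at this
  have h8 : lam ^ k ≤ (n : ℝ) * ‖Wc ^ k‖ := by
    rw [hWck, norm_map_ofReal]; exact hgrow k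
  have h9 : (n : ℝ) * q ^ k < lam ^ k := by
    rw [div_pow] at hk2
    calc (n : ℝ) * q ^ k < (lam ^ k / q ^ k) * q ^ k :=
        mul_lt_mul_of_pos_right hk2 (by positivity)
      _ = lam ^ k := by field_simp
  have h10 : (n : ℝ) * ‖Wc ^ k‖ ≤ (n : ℝ) * q ^ k :=
    mul_le_mul_of_nonneg_left h7.le (by positivity)
  linarith

/-- The best-response operator. -/
def T (f : Fin n → ℝ → ℝ) (W : Matrix (Fin n) (Fin n) ℝ) (ε x : Fin n → ℝ) : Fin n → ℝ :=
  fun j => f j (∑ i, x i * W i j + ε j)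

/-- Iterates of the best-response operator from a starting point `x0`. -/
def it (f : Fin n → ℝ → ℝ) (W : Matrix (Fin n) (Fin n) ℝ) (x0 : Fin n → ℝ) :
    ℕ → (Fin n → ℝ) → Fin n → ℝ
  | 0, _ => x0
  | k + 1, ε => T f W ε (it f W x0 k ε)

/-- A fixed point (equilibrium). -/
def IsFP (f : Fin n → ℝ → ℝ) (W : Matrix (Fin n) (Fin n) ℝ) (ε x : Fin n → ℝ) : Prop :=
  ∀ j, x j = f j (∑ i, x i * W i j + ε j)

section FP

variable {f : Fin n → ℝ → ℝ} {W : Matrix (Fin n) (Fin n) ℝ}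

lemma T_mono (hmono : ∀ j, Monotone (f j)) (hpos : ∀ i j, 0 ≤ W i j) {ε x y : Fin n → ℝ}
    (h : x ≤ y) : T f W ε x ≤ T f W ε y := by
  intro j
  refine hmono j (add_le_add_left (Finset.sum_le_sum fun i _ => ?_) _)
  exact mul_le_mul_of_nonneg_right (h i) (hpos i j)

lemma f_cont (hne : ∀ j, ∀ s t : ℝ, |f j s - f j t| ≤ |s - t|) (j : Fin n) :
    Continuous (f j) := by
  refine (LipschitzWith.of_dist_le_mul (K := 1) fun s t => ?_).continuous
  simpa [Real.dist_eq] using hne j s t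

lemma it_cont (hne : ∀ j, ∀ s t : ℝ, |f j s - f j t| ≤ |s - t|) (x0 : Fin n → ℝ) (k : ℕ) :
    Continuous fun ε => it f W x0 k ε := by
  induction k with
  | zero => exact continuous_const
  | succ k ih =>
    refine continuous_pi fun j => (f_cont hne j).comp ?_
    exact (continuous_finset_sum _ fun i _ =>
      ((continuous_apply i).comp ih).mul continuous_const).add (continuous_apply j)

variable {C : ℝ} (hmono : ∀ j, Monotone (f j)) (hpos : ∀ i j, 0 ≤ W i j)
  (hC : ∀ j t, |f j t| ≤ C)

include hC in
lemma it_bdd (x0 : Fin n → ℝ) (hx0 : ∀ j, |x0 j| ≤ C) (ε : Fin n → ℝ) (k : ℕ) (j : Fin n) :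
    |it f W x0 k ε j| ≤ C := by
  cases k with
  | zero => exact hx0 j
  | succ k => exact hC j _

include hmono hpos hC in
lemma it_anti (ε : Fin n → ℝ) : Antitone fun k => it f W (fun _ => C) k ε := by
  refine antitone_nat_of_succ_le fun k => ?_
  induction k with
  | zero =>
    intro j
    exact (abs_le.mp (hC j _)).2
  | succ k ih => exact T_mono hmono hpos ih

include hmono hpos hC in
lemma it_mono (ε : Fin n → ℝ) : Monotone fun k => it f W (fun _ => -C) k ε := by
  refine monotone_nat_of_le_succ fun k => ?_
  induction k with
  | zero =>
    intro j
    exact (abs_le.mp (hC j _)).1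
  | succ k ih => exact T_mono hmono hpos ih

/-- The maximal equilibrium candidate. -/
noncomputable def xhi (f : Fin n → ℝ → ℝ) (W : Matrix (Fin n) (Fin n) ℝ) (C : ℝ) (ε : Fin n → ℝ)
    (j : Fin n) : ℝ := ⨅ k : ℕ, it f W (fun _ => C) k ε j

/-- The minimal equilibrium candidate. -/
noncomputable def xlo (f : Fin n → ℝ → ℝ) (W : Matrix (Fin n) (Fin n) ℝ) (C : ℝ) (ε : Fin n → ℝ)
    (j : Fin n) : ℝ := ⨆ k : ℕ, it f W (fun _ => -C) k ε j

include hmono hpos hC in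
lemma tendsto_xhi (hC0 : 0 ≤ C) (ε : Fin n → ℝ) (j : Fin n) :
    Tendsto (fun k => it f W (fun _ => C) k ε j) atTop (𝓝 (xhi f W C ε j)) := by
  refine tendsto_atTop_ciInf (fun a b hab => it_anti hmono hpos hC ε hab j) ?_
  refine ⟨-C, ?_⟩
  rintro x ⟨k, rfl⟩
  exact (abs_le.mp (it_bdd hC _ (fun j => by rw [abs_of_nonneg hC0]) ε k j)).1

include hmono hpos hC in
lemma tendsto_xlo (hC0 : 0 ≤ C) (ε : Fin n → ℝ) (j : Fin n) :
    Tendsto (fun k => it f W (fun _ => -C) k ε j) atTop (𝓝 (xlo f W C ε j)) := by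
  refine tendsto_atTop_ciSup (fun a b hab => it_mono hmono hpos hC ε hab j) ?_
  refine ⟨C, ?_⟩
  rintro x ⟨k, rfl⟩
  exact (abs_le.mp (it_bdd hC _ (fun j => by rw [abs_neg, abs_of_nonneg hC0]) ε k j)).2

include hmono hpos hC in
lemma isFP_of_tendsto (hne : ∀ j, ∀ s t : ℝ, |f j s - f j t| ≤ |s - t|)
    {x0 : Fin n → ℝ} {z : Fin n → ℝ} {ε : Fin n → ℝ}
    (ht : ∀ j, Tendsto (fun k => it f W x0 k ε j) atTop (𝓝 (z j))) : IsFP f W ε z := by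
  intro j
  have h1 : Tendsto (fun k => it f W x0 (k + 1) ε j) atTop (𝓝 (z j)) :=
    (ht j).comp (tendsto_add_atTop_nat 1)
  have h2 : Tendsto (fun k => f j (∑ i, it f W x0 k ε i * W i j + ε j)) atTop
      (𝓝 (f j (∑ i, z i * W i j + ε j))) := by
    refine (((f_cont hne j).tendsto _).comp ?_)
    exact (tendsto_finset_sum _ fun i _ => (ht i).mul_const _).add tendsto_const_nhds
  have h3 : (fun k => it f W x0 (k + 1) ε j)
      = fun k => f j (∑ i, it f W x0 k ε i * W i j + ε j) := rfl
  rw [h3] at h1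
  exact tendsto_nhds_unique h1 h2

include hmono hpos hC in
lemma le_xhi (hC0 : 0 ≤ C) {ε y : Fin n → ℝ} (hy : IsFP f W ε y) : y ≤ xhi f W C ε := by
  intro j
  have hk : ∀ k, y j ≤ it f W (fun _ => C) k ε j := by
    intro k
    induction k with
    | zero =>
      have h : |y j| ≤ C := by rw [hy j]; exact hC j _
      exact (abs_le.mp h).2
    | succ k ih =>
      clear ih
      have hall : ∀ k, y ≤ it f W (fun _ => C) k ε := by
        intro k
        induction k with
        | zero =>
          intro j'
          have h : |y j'| ≤ C := by rw [hy j']; exact hC j' _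
          exact (abs_le.mp h).2
        | succ k ih =>
          have h := T_mono hmono hpos (ε := ε) ih
          intro j'
          calc y j' = T f W ε y j' := hy j'
            _ ≤ it f W (fun _ => C) (k + 1) ε j' := h j'
      exact hall (k + 1) j
  exact ge_of_tendsto (tendsto_xhi hmono hpos hC hC0 ε j) (Eventually.of_forall hk)

include hmono hpos hC in
lemma xlo_le (hC0 : 0 ≤ C) {ε y : Fin n → ℝ} (hy : IsFP f W ε y) : xlo f W C ε ≤ y := by
  intro j
  have hall : ∀ k, it f W (fun _ => -C) k ε ≤ y := by
    intro k
    induction k with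
    | zero =>
      intro j'
      have h : |y j'| ≤ C := by rw [hy j']; exact hC j' _
      exact (abs_le.mp h).1
    | succ k ih =>
      have h := T_mono hmono hpos (ε := ε) ih
      intro j'
      calc it f W (fun _ => -C) (k + 1) ε j' ≤ T f W ε y j' := h j'
        _ = y j' := (hy j').symm
  exact le_of_tendsto (tendsto_xlo hmono hpos hC hC0 ε j)
    (Eventually.of_forall fun k => hall k j)

include hmono hpos hC in
lemma xhi_isFP (hne : ∀ j, ∀ s t : ℝ, |f j s - f j t| ≤ |s - t|) (hC0 : 0 ≤ C)
    (ε : Fin n → ℝ) : IsFP f W ε (xhi f W C ε) :=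
  isFP_of_tendsto hmono hpos hC hne fun j => tendsto_xhi hmono hpos hC hC0 ε j

include hmono hpos hC in
lemma xlo_isFP (hne : ∀ j, ∀ s t : ℝ, |f j s - f j t| ≤ |s - t|) (hC0 : 0 ≤ C)
    (ε : Fin n → ℝ) : IsFP f W ε (xlo f W C ε) :=
  isFP_of_tendsto hmono hpos hC hne fun j => tendsto_xlo hmono hpos hC hC0 ε j

include hmono hpos hC in
lemma xhi_measurable (hne : ∀ j, ∀ s t : ℝ, |f j s - f j t| ≤ |s - t|) (hC0 : 0 ≤ C)
    (j : Fin n) : Measurable fun ε => xhi f W C ε j := by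
  refine measurable_of_tendsto_metrizable
    (f := fun k ε => it f W (fun _ => C) k ε j)
    (fun k => ((continuous_apply j).comp (it_cont hne _ k)).measurable) ?_
  exact tendsto_pi_nhds.mpr fun ε => tendsto_xhi hmono hpos hC hC0 ε j

include hmono hpos hC in
lemma xlo_measurable (hne : ∀ j, ∀ s t : ℝ, |f j s - f j t| ≤ |s - t|) (hC0 : 0 ≤ C)
    (j : Fin n) : Measurable fun ε => xlo f W C ε j := by
  refine measurable_of_tendsto_metrizable
    (f := fun k ε => it f W (fun _ => -C) k ε j)
    (fun k => ((continuous_apply j).comp (it_cont hne _ k)).measurable) ?_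
  exact tendsto_pi_nhds.mpr fun ε => tendsto_xlo hmono hpos hC hC0 ε j

end FP

/-- Key comparison: a fixed point for shock `ε` lies below any fixed point for
the strictly larger shock `ε + t`. -/
lemma keyA {f : Fin n → ℝ → ℝ} {W : Matrix (Fin n) (Fin n) ℝ}
    (hmono : ∀ j, Monotone (f j)) (hne : ∀ j, ∀ s t : ℝ, |f j s - f j t| ≤ |s - t|)
    (hpos : ∀ i j, 0 ≤ W i j) (hr : specRad W = 1)
    {ε x y : Fin n → ℝ} {t : ℝ} (ht : 0 < t)
    (hx : IsFP f W ε x) (hy : IsFP f W (fun j => ε j + t) y) : x ≤ y := by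
  set v : Fin n → ℝ := fun j => max (x j - y j) 0 with hvdef
  have hv0 : ∀ i, 0 ≤ v i := fun i => le_max_right _ _
  rw [Pi.le_def]
  by_contra hxy
  push_neg at hxy
  obtain ⟨j₀, hj₀⟩ := hxy
  have hvj₀ : 0 < v j₀ := by
    have : v j₀ = x j₀ - y j₀ := max_eq_left (by linarith)
    rw [this]; linarith
  obtain ⟨j₁, -, hj₁⟩ := Finset.exists_max_image Finset.univ v ⟨j₀, Finset.mem_univ j₀⟩
  have hm : 0 < v j₁ := lt_of_lt_of_le hvj₀ (hj₁ j₀ (Finset.mem_univ j₀))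
  set lam : ℝ := 1 + t / v j₁ with hlamdef
  have hlam : 1 < lam := by
    have : 0 < t / v j₁ := div_pos ht hm
    rw [hlamdef]; linarith
  have hineq : ∀ j, lam * v j ≤ ∑ i, v i * W i j := by
    intro j
    by_cases hcase : x j ≤ y j
    · have hvj : v j = 0 := max_eq_right (by linarith)
      rw [hvj, mul_zero]
      exact Finset.sum_nonneg fun i _ => mul_nonneg (hv0 i) (hpos i j)
    · push_neg at hcase
      have hvj : v j = x j - y j := max_eq_left (by linarith)
      set A : ℝ := ∑ i, x i * W i j + ε j with hA
      set B : ℝ := ∑ i, y i * W i j + (ε j + t) with hB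
      have hxj : x j = f j A := hx j
      have hyj : y j = f j B := hy j
      have hBA : B < A := by
        by_contra hba
        push_neg at hba
        have := hmono j hba
        rw [← hxj, ← hyj] at this
        linarith
      have h1 : x j - y j ≤ A - B := by
        calc x j - y j = f j A - f j B := by rw [hxj, hyj]
          _ ≤ |f j A - f j B| := le_abs_self _
          _ ≤ |A - B| := hne j A B
          _ = A - B := abs_of_pos (by linarith)
      have h3 : A - B = (∑ i, (x i * W i j - y i * W i j)) - t := by
        rw [hA, hB, Finset.sum_sub_distrib]
        ring
      have h4 : (∑ i, (x i * W i j - y i * W i j)) ≤ ∑ i, v i * W i j :=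
        Finset.sum_le_sum fun i _ => by
          rw [← sub_mul]
          exact mul_le_mul_of_nonneg_right (le_max_left _ _) (hpos i j)
      have h5 : v j + t ≤ ∑ i, v i * W i j := by rw [hvj]; linarith
      have h6 : lam * v j ≤ v j + t := by
        have h7 : (t / v j₁) * v j ≤ (t / v j₁) * v j₁ :=
          mul_le_mul_of_nonneg_left (hj₁ j (Finset.mem_univ j)) (by positivity)
        have h8 : (t / v j₁) * v j₁ = t := div_mul_cancel₀ t hm.ne'
        rw [hlamdef]
        nlinarith
      linarith
  have hzero := spec_contra W hpos hr v hv0 lam hlam hineq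
  have : v j₀ = 0 := by rw [hzero]; rfl
  linarith

/-- The set of shocks where minimal and maximal equilibria differ is Lebesgue-null. -/
lemma null_bad {m : ℕ} {f : Fin (m + 1) → ℝ → ℝ} {W : Matrix (Fin (m + 1)) (Fin (m + 1)) ℝ}
    {C : ℝ} (hmono : ∀ j, Monotone (f j))
    (hne : ∀ j, ∀ s t : ℝ, |f j s - f j t| ≤ |s - t|)
    (hpos : ∀ i j, 0 ≤ W i j) (hr : specRad W = 1)
    (hC : ∀ j t, |f j t| ≤ C) (hC0 : 0 ≤ C) :
    volume {ε : Fin (m + 1) → ℝ | xlo f W C ε ≠ xhi f W C ε} = 0 := by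
  set N := {ε : Fin (m + 1) → ℝ | xlo f W C ε ≠ xhi f W C ε} with hNdef
  have hNmeas : MeasurableSet N := by
    have h1 : N = ⋃ j, {ε | xlo f W C ε j ≠ xhi f W C ε j} := by
      ext ε
      simp only [hNdef, Set.mem_setOf_eq, Set.mem_iUnion, Function.ne_iff]
    rw [h1]
    exact MeasurableSet.iUnion fun j =>
      (measurableSet_eq_fun (xlo_measurable hmono hpos hC hne hC0 j)
        (xhi_measurable hmono hpos hC hne hC0 j)).compl
  set e := MeasurableEquiv.piFinSuccAbove (fun _ : Fin (m + 1) => ℝ) 0 with hedef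
  set ψ : ℝ × (Fin m → ℝ) → (Fin (m + 1) → ℝ) :=
    fun p => e.symm (p.1, fun j => p.2 j + p.1) with hψdef
  -- ψ is measure preserving
  have h1 : MeasurePreserving (fun p : ℝ × (Fin m → ℝ) => (p.1, fun j => p.2 j + p.1))
      ((volume : Measure ℝ).prod volume) ((volume : Measure ℝ).prod volume) := by
    have hgm : Measurable (Function.uncurry
        fun (s : ℝ) (b : Fin m → ℝ) => (fun j => b j + s : Fin m → ℝ)) :=
      measurable_pi_iff.mpr fun j =>
        ((measurable_pi_apply j).comp measurable_snd).add measurable_fst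
    have hmap : ∀ s : ℝ, Measure.map
        (fun (b : Fin m → ℝ) => (fun j => b j + s : Fin m → ℝ)) volume = volume := by
      intro s
      have h2 : (fun (b : Fin m → ℝ) => (fun j => b j + s : Fin m → ℝ))
          = fun b => b + (fun _ => s) := rfl
      rw [h2, map_add_right_eq_self]
    exact MeasurePreserving.skew_product (g := fun (s : ℝ) (b : Fin m → ℝ) => fun j => b j + s)
      (MeasurePreserving.id (volume : Measure ℝ)) hgm (Filter.Eventually.of_forall hmap)
  have h2 : MeasurePreserving (⇑e.symm) ((volume : Measure ℝ).prod volume)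
      (volume : Measure (Fin (m + 1) → ℝ)) := by
    have h3 := (measurePreserving_piFinSuccAbove (fun _ : Fin (m + 1) => (volume : Measure ℝ)) 0).symm e
    have hvp1 : (volume : Measure (Fin (m + 1) → ℝ)) = Measure.pi fun _ => volume := volume_pi
    have hvp2 : (volume : Measure (Fin m → ℝ)) = Measure.pi fun _ => volume := volume_pi
    rw [hvp1, hvp2]
    exact h3
  have hmp : MeasurePreserving ψ ((volume : Measure ℝ).prod volume)
      (volume : Measure (Fin (m + 1) → ℝ)) := h2.comp h1
  have hkey : volume N = ∫⁻ b : Fin m → ℝ, volume {s : ℝ | ψ (s, b) ∈ N} ∂volume := by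
    rw [← hmp.measure_preimage hNmeas.nullMeasurableSet,
      Measure.prod_apply_symm (hmp.measurable hNmeas)]
    rfl
  rw [hkey]
  have hzero : ∀ b : Fin m → ℝ, volume {s : ℝ | ψ (s, b) ∈ N} = 0 := by
    intro b
    set base : Fin (m + 1) → ℝ := Fin.cons 0 b with hbase
    have hψ_eq : ∀ s : ℝ, ψ (s, b) = fun j => base j + s := by
      intro s
      funext j
      have hc : ψ (s, b) = Fin.cons s (fun j => b j + s) := by
        rw [hψdef]
        simp [hedef, MeasurableEquiv.piFinSuccAbove_symm_apply, Fin.insertNthEquiv,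
          Fin.consEquiv]
      rw [hc]
      refine Fin.cases ?_ (fun i => ?_) j <;> simp [hbase]
    -- the monotone one-dimensional section
    set h : ℝ → ℝ := fun s => ∑ j, xlo f W C (fun j => base j + s) j with hhdef
    have hfp' : ∀ (s s' : ℝ), s < s' →
        IsFP f W (fun j => (base j + s) + (s' - s)) (xlo f W C (fun j => base j + s')) := by
      intro s s' hss'
      rw [show (fun j => base j + s + (s' - s)) = (fun j => base j + s')
        from funext fun j => by ring]
      exact xlo_isFP hmono hpos hC hne hC0 (fun j => base j + s')
    have hmonoh : Monotone h := by
      intro s s' hss'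
      rcases eq_or_lt_of_le hss' with rfl | hlt
      · exact le_rfl
      · refine Finset.sum_le_sum fun j _ => ?_
        exact keyA hmono hne hpos hr (by linarith : (0:ℝ) < s' - s)
          (xlo_isFP hmono hpos hC hne hC0 (fun j => base j + s)) (hfp' s s' hlt) j
    have hsub : {s : ℝ | ψ (s, b) ∈ N} ⊆ {s : ℝ | ¬ContinuousAt h s} := by
      intro s hs
      rw [Set.mem_setOf_eq, hψ_eq s] at hs
      set εs : Fin (m + 1) → ℝ := fun j => base j + s with hεs
      have hle : ∀ j, xlo f W C εs j ≤ xhi f W C εs j :=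
        fun j => xlo_le hmono hpos hC hC0 (xhi_isFP hmono hpos hC hne hC0 εs) j
      have hlt : ∑ j, xlo f W C εs j < ∑ j, xhi f W C εs j := by
        obtain ⟨j, hj⟩ := Function.ne_iff.mp hs
        exact Finset.sum_lt_sum (fun j _ => hle j) ⟨j, Finset.mem_univ j, (hle j).lt_of_ne hj⟩
      set δ : ℝ := (∑ j, xhi f W C εs j) - ∑ j, xlo f W C εs j with hδ
      have hδ0 : 0 < δ := by rw [hδ]; linarith
      have hjump : ∀ s' : ℝ, s < s' → h s + δ ≤ h s' := by
        intro s' hss'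
        have h6 : xhi f W C εs ≤ xlo f W C (fun j => base j + s') :=
          keyA hmono hne hpos hr (by linarith : (0:ℝ) < s' - s)
            (xhi_isFP hmono hpos hC hne hC0 εs) (hfp' s s' hss')
        have h7 : (∑ j, xhi f W C εs j) ≤ ∑ j, xlo f W C (fun j => base j + s') j :=
          Finset.sum_le_sum fun j _ => h6 j
        have h8 : h s = ∑ j, xlo f W C εs j := rfl
        have h9 : h s' = ∑ j, xlo f W C (fun j => base j + s') j := rfl
        rw [h8, h9, hδ]
        linarith
      intro hcont
      have hev : ∀ᶠ s' in nhds s, h s' < h s + δ :=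
        hcont.tendsto.eventually_lt_const (by linarith)
      have hev2 : ∀ᶠ s' in nhdsWithin s (Set.Ioi s), h s' < h s + δ :=
        hev.filter_mono nhdsWithin_le_nhds
      obtain ⟨s', hs'1, hs'2⟩ := (hev2.and self_mem_nhdsWithin).exists
      have := hjump s' hs'2
      linarith
    refine measure_mono_null hsub ?_
    exact (hmonoh.countable_not_continuousAt).measure_zero volume
  rw [lintegral_congr fun b => hzero b]
  simp

end Stmt11

open Stmt11

/-- If each `f j` is increasing, non-expansive and bounded, and `W` is nonnegative
with spectral radius `1`, then (i) for every `ε` an equilibrium exists; (ii) the set of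
shocks admitting two distinct equilibria has Lebesgue measure zero; consequently
(iii) under any absolutely continuous probability distribution of the shock, the
equilibrium is unique with probability one. -/
theorem stmt11 {n : ℕ} (f : Fin n → ℝ → ℝ) (W : Matrix (Fin n) (Fin n) ℝ)
    (hmono : ∀ j, Monotone (f j))
    (hne : ∀ j, ∀ s t : ℝ, |f j s - f j t| ≤ |s - t|)
    (hbdd : ∀ j, ∃ M > 0, ∀ t : ℝ, |f j t| ≤ M)
    (hpos : ∀ i j, 0 ≤ W i j)
    (hr : specRad W = 1) :
    (∀ ε : Fin n → ℝ, ∃ x : Fin n → ℝ, ∀ j, x j = f j (∑ i, x i * W i j + ε j)) ∧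
    MeasureTheory.volume {ε : Fin n → ℝ | ∃ x y : Fin n → ℝ, x ≠ y ∧
      (∀ j, x j = f j (∑ i, x i * W i j + ε j)) ∧
      (∀ j, y j = f j (∑ i, y i * W i j + ε j))} = 0 ∧
    ∀ μ : MeasureTheory.Measure (Fin n → ℝ), MeasureTheory.IsProbabilityMeasure μ →
      μ.AbsolutelyContinuous MeasureTheory.volume →
      μ {ε : Fin n → ℝ | ∃ x y : Fin n → ℝ, x ≠ y ∧
        (∀ j, x j = f j (∑ i, x i * W i j + ε j)) ∧
        (∀ j, y j = f j (∑ i, y i * W i j + ε j))} = 0 := by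
  rcases Nat.eq_zero_or_pos n with hn | hn
  · subst hn
    have hempty : {ε : Fin 0 → ℝ | ∃ x y : Fin 0 → ℝ, x ≠ y ∧
        (∀ j, x j = f j (∑ i, x i * W i j + ε j)) ∧
        (∀ j, y j = f j (∑ i, y i * W i j + ε j))} = ∅ := by
      ext ε
      simp only [Set.mem_setOf_eq, Set.mem_empty_iff_false, iff_false, not_exists]
      intro x y h
      exact absurd (Subsingleton.elim x y) (fun hxy => h.1 hxy)
    refine ⟨fun ε => ⟨fun _ => 0, fun j => j.elim0⟩, ?_, ?_⟩
    · rw [hempty]; exact measure_empty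
    · intro μ _ _; rw [hempty]; exact measure_empty
  · obtain ⟨m, rfl⟩ : ∃ m, n = m + 1 := ⟨n - 1, (Nat.succ_pred_eq_of_pos hn).symm⟩
    choose M hMpos hM using hbdd
    set C : ℝ := ∑ j, M j with hCdef
    have hC : ∀ j t, |f j t| ≤ C := fun j t =>
      (hM j t).trans (Finset.single_le_sum (fun i _ => (hMpos i).le) (Finset.mem_univ j))
    have hC0 : 0 ≤ C := Finset.sum_nonneg fun i _ => (hMpos i).le
    have hsub : {ε : Fin (m + 1) → ℝ | ∃ x y : Fin (m + 1) → ℝ, x ≠ y ∧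
        (∀ j, x j = f j (∑ i, x i * W i j + ε j)) ∧
        (∀ j, y j = f j (∑ i, y i * W i j + ε j))}
        ⊆ {ε : Fin (m + 1) → ℝ | xlo f W C ε ≠ xhi f W C ε} := by
      rintro ε ⟨x, y, hxy, hx, hy⟩
      intro heq
      apply hxy
      have hxlo : xlo f W C ε ≤ x := xlo_le hmono hpos hC hC0 hx
      have hxhi : x ≤ xhi f W C ε := le_xhi hmono hpos hC hC0 hx
      have hylo : xlo f W C ε ≤ y := xlo_le hmono hpos hC hC0 hy
      have hyhi : y ≤ xhi f W C ε := le_xhi hmono hpos hC hC0 hy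
      funext j
      have h1 : x j = xlo f W C ε j := le_antisymm (by rw [heq]; exact hxhi j) (hxlo j)
      have h2 : y j = xlo f W C ε j := le_antisymm (by rw [heq]; exact hyhi j) (hylo j)
      rw [h1, h2]
    have hN0 := null_bad hmono hne hpos hr hC hC0
    refine ⟨fun ε => ⟨xhi f W C ε, xhi_isFP hmono hpos hC hne hC0 ε⟩, ?_, ?_⟩
    · exact measure_mono_null hsub hN0
    · intro μ _ hac
      exact measure_mono_null hsub (hac hN0)
end

section
/- Let ℓ, u ∈ ℝ^n with u_j > ℓ_j for all j, let f_j(t) = min{max{t, ℓ_j}, u_j} for each j, let W ∈ ℝ^{n×n} be nonnegative and row stochastic (or column stochastic), and let ε ∈ ℝ^n. If x* is the unique equilibrium, i.e. the unique x with x_j = f_j(Σ_{i=1}^n x_i w_{ij} + ε_j) for all j, then there exists j with x*_j = u_j or x*_j = ℓ_j. -/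
/-- For bounded identity interaction functions `f j t = min (max t (ℓ j)) (u j)` with
`ℓ j < u j`, and `W` nonnegative and row (or column) stochastic: if `x*` is the unique
equilibrium, then some component of `x*` is at its upper or lower bound. -/
theorem stmt18 {n : ℕ} (hn : 0 < n) (l u : Fin n → ℝ) (hlu : ∀ j, l j < u j)
    (W : Matrix (Fin n) (Fin n) ℝ) (ε : Fin n → ℝ)
    (hpos : ∀ i j, 0 ≤ W i j)
    (hstoch : (∀ i, ∑ j, W i j = 1) ∨ (∀ j, ∑ i, W i j = 1))
    (xstar : Fin n → ℝ)
    (hx : ∀ j, xstar j = min (max (∑ i, xstar i * W i j + ε j) (l j)) (u j))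
    (huniq : ∀ y : Fin n → ℝ,
      (∀ j, y j = min (max (∑ i, y i * W i j + ε j) (l j)) (u j)) → y = xstar) :
    ∃ j, xstar j = u j ∨ xstar j = l j := by
  by_contra hcon
  push_neg at hcon
  -- strict interiority
  have hlt : ∀ j, l j < xstar j ∧ xstar j < u j := by
    intro j
    obtain ⟨hju, hjl⟩ := hcon j
    constructor
    · have : l j ≤ xstar j := by
        rw [hx j]
        exact le_min (le_max_right _ _) (hlu j).le
      exact lt_of_le_of_ne this (by simpa [eq_comm] using hjl)
    · have : xstar j ≤ u j := by rw [hx j]; exact min_le_right _ _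
      exact lt_of_le_of_ne this hju
  -- xstar is an exact linear fixed point
  have heq : ∀ j, xstar j = ∑ i, xstar i * W i j + ε j := by
    intro j
    have h1 := hx j
    rcases le_total (max (∑ i, xstar i * W i j + ε j) (l j)) (u j) with h | h
    · rw [min_eq_left h] at h1
      rcases le_total (∑ i, xstar i * W i j + ε j) (l j) with h2 | h2
      · rw [max_eq_right h2] at h1
        exact absurd h1 (hlt j).1.ne'
      · rwa [max_eq_left h2] at h1
    · rw [min_eq_right h] at h1
      exact absurd h1 (ne_of_lt (hlt j).2)
  -- get a nonzero left fixed vector v of W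
  obtain ⟨v, hv0, hvW⟩ : ∃ v : Fin n → ℝ, v ≠ 0 ∧ ∀ j, ∑ i, v i * W i j = v j := by
    rcases hstoch with hrow | hcol
    · have hdet : (W - 1).det = 0 := by
        rw [← Matrix.exists_mulVec_eq_zero_iff]
        refine ⟨fun _ => 1, ?_, ?_⟩
        · intro h
          have := congrFun h ⟨0, hn⟩
          simp at this
        · funext j
          simp [Matrix.mulVec, dotProduct, Matrix.sub_apply, Matrix.one_apply,
            Finset.sum_sub_distrib, hrow j]
      obtain ⟨v, hv0, hv⟩ := Matrix.exists_vecMul_eq_zero_iff.mpr hdet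
      refine ⟨v, hv0, fun j => ?_⟩
      have := congrFun hv j
      simp [Matrix.vecMul, dotProduct, Matrix.sub_apply, Matrix.one_apply,
        mul_sub, Finset.sum_sub_distrib, sub_eq_zero] at this
      simpa using this
    · exact ⟨fun _ => 1, by
        intro h
        have := congrFun h ⟨0, hn⟩
        simp at this,
        fun j => by simpa using hcol j⟩
  -- perturbation size
  have hne : (Finset.univ : Finset (Fin n)).Nonempty := ⟨⟨0, hn⟩, Finset.mem_univ _⟩
  set δ : ℝ := Finset.univ.inf' hne (fun j => min (u j - xstar j) (xstar j - l j)) with hδ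
  have hδpos : 0 < δ := by
    rw [hδ, Finset.lt_inf'_iff]
    intro j _
    exact lt_min (sub_pos.mpr (hlt j).2) (sub_pos.mpr (hlt j).1)
  set M : ℝ := Finset.univ.sup' hne (fun j => |v j|) with hM
  have hM0 : 0 ≤ M := by
    obtain ⟨j, _⟩ := hne
    exact le_trans (abs_nonneg (v j)) (Finset.le_sup' (fun j => |v j|) (Finset.mem_univ j))
  set t : ℝ := δ / (2 * (M + 1)) with ht
  have htpos : 0 < t := div_pos hδpos (by linarith)
  have hsmall : ∀ j, |t * v j| < δ := by
    intro j
    have h1 : |v j| ≤ M := Finset.le_sup' (fun j => |v j|) (Finset.mem_univ j)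
    have h2 : |t * v j| = t * |v j| := by rw [abs_mul, abs_of_pos htpos]
    have h3 : t * |v j| ≤ t * (M + 1) := by nlinarith
    have h4 : t * (M + 1) = δ / 2 := by
      rw [ht]; field_simp
    linarith
  set y : Fin n → ℝ := fun j => xstar j + t * v j with hy
  have hybnd : ∀ j, l j < y j ∧ y j < u j := by
    intro j
    have h1 := hsmall j
    have h2 : δ ≤ min (u j - xstar j) (xstar j - l j) :=
      Finset.inf'_le _ (Finset.mem_univ j)
    have h3 := abs_lt.mp h1
    constructor
    · have := le_trans h2 (min_le_right _ _); simp [hy]; linarith [h3.1]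
    · have := le_trans h2 (min_le_left _ _); simp [hy]; linarith [h3.2]
  have hyeq : ∀ j, y j = min (max (∑ i, y i * W i j + ε j) (l j)) (u j) := by
    intro j
    have hsum : ∑ i, y i * W i j + ε j = y j := by
      have : ∑ i, y i * W i j = ∑ i, xstar i * W i j + t * ∑ i, v i * W i j := by
        rw [Finset.mul_sum, ← Finset.sum_add_distrib]
        congr 1; funext i; simp [hy]; ring
      rw [this, hvW j]
      have := heq j
      simp [hy]; linarith
    rw [hsum, max_eq_left (hybnd j).1.le, min_eq_left (hybnd j).2.le]
  have := huniq y hyeq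
  -- derive contradiction: y ≠ xstar
  obtain ⟨j, hvj⟩ := Function.ne_iff.mp hv0
  have hyj := congrFun this j
  simp [hy] at hyj
  rcases hyj with h | h
  · exact absurd h (ne_of_gt htpos)
  · exact hvj (by simpa using h)
end

section
/- Let ℓ, u ∈ ℝ^n with ℓ ≤ u, let f_j(t) = min{max{t, ℓ_j}, u_j} for each j, let W ∈ ℝ^{n×n} be nonnegative and stochastic, let ε ∈ ℝ^n, and let g : ℝ^n → ℝ be strictly increasing. Then any solution x* of the programming problem: maximize g(x) over x ∈ [ℓ, u] subject to 0 ≤ max{xW + ε − x, ℓ − x} componentwise, is an equilibrium, i.e. satisfies x*_j = min{max{Σ_{i=1}^n x*_i w_{ij} + ε_j, ℓ_j}, u_j} for all j. -/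
/-! Write `T x = f(xW + ε)` for the clamped response map. Since `W ≥ 0`, `T` is monotone, and a
point `x ≤ u` satisfies the constraint `0 ≤ max (xW + ε − x) (ℓ − x)` exactly when `x ≤ T x`.
Hence for a maximiser `x*` the point `T x*` lies above `x*`, stays in `[ℓ, u]` and is again
feasible (`T x* ≤ T (T x*)`), so `g (T x*) ≤ g x*` and strict monotonicity of `g` forces
`T x* = x*`. -/

open Finset

lemma StrictMono.eq_of_le_of_apply_le {α β : Type*} [PartialOrder α] [Preorder β] {g : α → β}
    (hg : StrictMono g) {x y : α} (hxy : x ≤ y) (hgyx : g y ≤ g x) : x = y := by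
  by_contra hne
  exact (hg (lt_of_le_of_ne hxy hne)).not_ge hgyx

namespace ClampedEquilibrium

variable {ι : Type*} [Fintype ι] (l u : ι → ℝ) (W : Matrix ι ι ℝ) (ε : ι → ℝ)

noncomputable def response (x : ι → ℝ) : ι → ℝ :=
  fun j => min (max (∑ i, x i * W i j + ε j) (l j)) (u j)

def Feasible (x : ι → ℝ) : Prop :=
  ∀ j, 0 ≤ max (∑ i, x i * W i j + ε j - x j) (l j - x j)

variable {l u W ε}

lemma feasible_iff {x : ι → ℝ} :
    Feasible l W ε x ↔ ∀ j, x j ≤ max (∑ i, x i * W i j + ε j) (l j) := by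
  simp only [Feasible, max_sub_sub_right, sub_nonneg]

lemma response_le (x : ι → ℝ) : response l u W ε x ≤ u :=
  fun _ => min_le_right _ _

lemma response_monotone (hW : ∀ i j, 0 ≤ W i j) : Monotone (response l u W ε) := by
  intro x y hxy j
  have hsum : ∑ i, x i * W i j ≤ ∑ i, y i * W i j :=
    sum_le_sum fun i _ => mul_le_mul_of_nonneg_right (hxy i) (hW i j)
  exact min_le_min_right _ (max_le_max_right _ (by linarith))

lemma le_response_of_feasible {x : ι → ℝ} (hxu : x ≤ u) (hx : Feasible l W ε x) :
    x ≤ response l u W ε x :=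
  fun j => le_min (feasible_iff.mp hx j) (hxu j)

lemma feasible_response (hW : ∀ i j, 0 ≤ W i j) {x : ι → ℝ} (hx : x ≤ response l u W ε x) :
    Feasible l W ε (response l u W ε x) := by
  rw [feasible_iff]
  exact fun j => (response_monotone hW hx j).trans (min_le_left _ _)

end ClampedEquilibrium

open ClampedEquilibrium

theorem stmt19_general {n : ℕ} (l u : Fin n → ℝ)
    (W : Matrix (Fin n) (Fin n) ℝ) (ε : Fin n → ℝ)
    (hpos : ∀ i j, 0 ≤ W i j)
    (g : (Fin n → ℝ) → ℝ) (hg : StrictMono g)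
    (xstar : Fin n → ℝ)
    (hmeml : l ≤ xstar) (hmemu : xstar ≤ u)
    (hfeas : ∀ j, 0 ≤ max (∑ i, xstar i * W i j + ε j - xstar j) (l j - xstar j))
    (hopt : ∀ x : Fin n → ℝ, l ≤ x → x ≤ u →
      (∀ j, 0 ≤ max (∑ i, x i * W i j + ε j - x j) (l j - x j)) → g x ≤ g xstar) :
    ∀ j, xstar j = min (max (∑ i, xstar i * W i j + ε j) (l j)) (u j) := by
  have hle : xstar ≤ response l u W ε xstar := le_response_of_feasible hmemu hfeas
  have hopt_response : g (response l u W ε xstar) ≤ g xstar :=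
    hopt _ (hmeml.trans hle) (response_le xstar) (feasible_response hpos hle)
  exact congrFun (hg.eq_of_le_of_apply_le hle hopt_response)

/-- For bounded identity interaction functions `f j t = min (max t (ℓ j)) (u j)`,
`W` nonnegative and (row or column) stochastic, and a strictly increasing objective
`g`, any solution `x*` of: maximize `g x` over `x ∈ [ℓ, u]` subject to
`0 ≤ max (x W + ε − x) (ℓ − x)` componentwise, is an equilibrium. -/
theorem stmt19 {n : ℕ} (l u : Fin n → ℝ) (hlu : l ≤ u)
    (W : Matrix (Fin n) (Fin n) ℝ) (ε : Fin n → ℝ)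
    (hpos : ∀ i j, 0 ≤ W i j)
    (hstoch : (∀ i, ∑ j, W i j = 1) ∨ (∀ j, ∑ i, W i j = 1))
    (g : (Fin n → ℝ) → ℝ) (hg : StrictMono g)
    (xstar : Fin n → ℝ)
    (hmeml : l ≤ xstar) (hmemu : xstar ≤ u)
    (hfeas : ∀ j, 0 ≤ max (∑ i, xstar i * W i j + ε j - xstar j) (l j - xstar j))
    (hopt : ∀ x : Fin n → ℝ, l ≤ x → x ≤ u →
      (∀ j, 0 ≤ max (∑ i, x i * W i j + ε j - x j) (l j - x j)) → g x ≤ g xstar) :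
    ∀ j, xstar j = min (max (∑ i, xstar i * W i j + ε j) (l j)) (u j) :=
  stmt19_general l u W ε hpos g hg xstar hmeml hmemu hfeas hopt
end
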